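/- arXiv:1911.11562 — 4 statements merged into one kernel-verified Lean document; each statement's English description precedes it below -/
import Mathlib

section
/- There exists a universal constant C > 0 such that for every positive integer n and every partition Π of {1,...,n} into k pairwise disjoint intervals, there exists a recursive dyadic partition Π̃ of {1,...,n} that refines Π (every interval of Π̃ is contained in some interval of Π) with |Π̃| ≤ C·k·log₂(en/k). Equivalently, for all θ ∈ ℝ^n and all integers r ≥ 0, k^(r)_rdp(θ) ≤ C·k^(r)_all(θ)·log(en/k^(r)_all(θ)). -/
open MeasureTheory ProbabilityTheory BigOperators

attribute [local instance] Classical.propDecidable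

noncomputable section

/-- The `d`-dimensional lattice with `n` points per side (0-indexed; the point
`x` corresponds to `(x 0 + 1, …, x (d-1) + 1) ∈ {1,…,n}^d`). -/
abbrev Grid (d n : ℕ) := Fin d → Fin n

/-- Squared Euclidean norm of a vector indexed by `ι`. -/
def sumSq {ι : Type*} [Fintype ι] (f : ι → ℝ) : ℝ := ∑ x, (f x) ^ 2

/-- A dyadic interval of `{1,…,n}` (0-indexed as a subset of `Fin n`):
`[(a-1)·2^s + 1, a·2^s]` in 1-indexed terms. -/
def IsDyadicInterval (n : ℕ) (I : Set (Fin n)) : Prop :=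
  ∃ s a : ℕ, 1 ≤ a ∧ a * 2 ^ s ≤ n ∧
    I = {x : Fin n | (a - 1) * 2 ^ s ≤ (x : ℕ) ∧ (x : ℕ) < a * 2 ^ s}

/-- A (nonempty) integer interval in `{1,…,n}`. -/
def IsIntervalSet {n : ℕ} (I : Set (Fin n)) : Prop :=
  I.Nonempty ∧ ∃ a b : Fin n, I = Set.Icc a b

/-- A partition of `{1,…,n}` into intervals. -/
def IsIntervalPartition {n : ℕ} (P : Finset (Set (Fin n))) : Prop :=
  (∀ I ∈ P, IsIntervalSet I) ∧ (∀ I ∈ P, ∀ J ∈ P, I ≠ J → Disjoint I J) ∧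
    (⋃ I ∈ P, I) = Set.univ

/-- A dyadic split of an interval into two halves. -/
def IsDyadicSplit1 {n : ℕ} (I I₁ I₂ : Set (Fin n)) : Prop :=
  ∃ a b : Fin n, a < b ∧ I = Set.Icc a b ∧
    I₁ = {x ∈ I | (x : ℕ) ≤ (a : ℕ) + ((b : ℕ) - (a : ℕ)) / 2} ∧ I₂ = I \ I₁

/-- Recursive dyadic partitions of `{1,…,n}`. -/
inductive IsRDP1 (n : ℕ) : Finset (Set (Fin n)) → Prop where
  | triv : IsRDP1 n {Set.univ}
  | split (P : Finset (Set (Fin n))) (I I₁ I₂ : Set (Fin n)) :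
      IsRDP1 n P → I ∈ P → IsDyadicSplit1 I I₁ I₂ →
      IsRDP1 n (insert I₁ (insert I₂ (P.erase I)))

/-- `θ` is a discrete polynomial of degree at most `r` on the interval `I ⊆ {1,…,n}`. -/
def IsPolyOn1 {n : ℕ} (r : ℕ) (θ : Fin n → ℝ) (I : Set (Fin n)) : Prop :=
  ∃ f : Polynomial ℝ, f.natDegree ≤ r ∧
    ∀ x ∈ I, θ x = Polynomial.eval ((((x : ℕ) : ℝ) + 1) / n) f

/-- `k^(r)_all(θ)` for univariate `θ`. -/
def kAll1 {n : ℕ} (r : ℕ) (θ : Fin n → ℝ) : ℕ :=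
  sInf {k | ∃ P : Finset (Set (Fin n)),
    IsIntervalPartition P ∧ (∀ I ∈ P, IsPolyOn1 r θ I) ∧ P.card = k}

/-- `k^(r)_rdp(θ)` for univariate `θ`. -/
def kRdp1 {n : ℕ} (r : ℕ) (θ : Fin n → ℝ) : ℕ :=
  sInf {k | ∃ P : Finset (Set (Fin n)),
    IsRDP1 n P ∧ (∀ I ∈ P, IsPolyOn1 r θ I) ∧ P.card = k}

/-- `V^(r)(θ) = n^(r-1) · ‖D^(r) θ‖₁`, the `r`-th order total variation of `θ ∈ ℝ^n`. -/
def Vr {n : ℕ} (r : ℕ) (θ : Fin n → ℝ) : ℝ :=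
  (n : ℝ) ^ (r - 1) * ∑ j ∈ Finset.range (n - r),
    |∑ i ∈ Finset.range (r + 1),
      (-1 : ℝ) ^ (r - i) * (r.choose i : ℝ) * (if h : j + i < n then θ ⟨j + i, h⟩ else 0)|

end

/-!
Mark the right endpoints of the `k` intervals of `Π` as cuts and split `{1,…,n}` dyadically,
recursing into a piece exactly when it contains some cut `c` together with `c + 1`; the final
pieces then refine `Π`. An interval of length at most `2 ^ D` containing `s ≥ 1` cuts is split
into at most `s (D + 2 - log₂ s)` pieces: the recursion for this bound holds because binary
entropy is at most one bit and `x ↦ x (A - log₂ x)` increases while `log₂ x ≤ A - log₂ e`.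
With `D = ⌈log₂ n⌉` and `s ≤ k` this gives at most `3 k log₂ (e n / k)` pieces.
-/

namespace DyadicRefinement

open Real Finset

lemma inv_log_two_le_two : (log 2)⁻¹ ≤ 2 := by
  rw [inv_le_comm₀ (log_pos one_lt_two) two_pos]
  linarith [log_two_gt_d9]

lemma mul_sub_logb_le_mul_sub_logb {A x y : ℝ} (hx : 0 < x) (hxy : x ≤ y)
    (hA : logb 2 y + (log 2)⁻¹ ≤ A) : x * (A - logb 2 x) ≤ y * (A - logb 2 y) := by
  have hy : 0 < y := hx.trans_le hxy
  have hlog : x * (logb 2 y - logb 2 x) ≤ (y - x) * (log 2)⁻¹ := by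
    rw [← logb_div hy.ne' hx.ne', logb, ← div_eq_mul_inv, ← mul_div_assoc,
      div_le_div_iff_of_pos_right (log_pos one_lt_two)]
    calc x * log (y / x) ≤ x * (y / x - 1) :=
          mul_le_mul_of_nonneg_left (log_le_sub_one_of_pos (by positivity)) hx.le
      _ = y - x := by field_simp
  nlinarith [mul_le_mul_of_nonneg_left hA (sub_nonneg.2 hxy)]

/-- The binary entropy is at most one bit. -/
lemma mul_sub_logb_add_le (A : ℝ) {x y : ℝ} (hx : 0 < x) (hy : 0 < y) :
    x * (A - logb 2 x) + y * (A - logb 2 y) ≤ (x + y) * (A + 1 - logb 2 (x + y)) := by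
  have half : ∀ z, 0 < z → z * (log (x + y) - log 2 - log z) ≤ (x + y) / 2 - z := by
    intro z hz
    have h := log_le_sub_one_of_pos (show 0 < (x + y) / (2 * z) by positivity)
    rw [log_div (by positivity) (by positivity), log_mul two_ne_zero hz.ne'] at h
    calc z * (log (x + y) - log 2 - log z) ≤ z * ((x + y) / (2 * z) - 1) :=
          mul_le_mul_of_nonneg_left (by linarith) hz.le
      _ = (x + y) / 2 - z := by field_simp
  have hsum := add_le_add (half x hx) (half y hy)
  have hdiff : (x + y) * (A + 1 - logb 2 (x + y)) - (x * (A - logb 2 x) + y * (A - logb 2 y))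
      = -(x * (log (x + y) - log 2 - log x) + y * (log (x + y) - log 2 - log y)) / log 2 := by
    simp only [logb]
    field_simp
    ring
  rw [← sub_nonneg, hdiff]
  exact div_nonneg (by linarith) (log_pos one_lt_two).le

noncomputable def leafBound (D s : ℕ) : ℝ := if s = 0 then 1 else s * (D + 2 - logb 2 s)

lemma leafBound_add_le {d s s₁ s₂ : ℕ} (hs : s₁ + s₂ ≤ s) (hs₀ : s ≠ 0)
    (hlog : logb 2 s ≤ d + 1) : leafBound d s₁ + leafBound d s₂ ≤ leafBound (d + 1) s := by
  have hsR : (1 : ℝ) ≤ s := by exact_mod_cast Nat.one_le_iff_ne_zero.2 hs₀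
  have mono : ∀ x : ℝ, 0 < x → x ≤ s → x * (d + 3 - logb 2 x) ≤ s * (d + 3 - logb 2 s) :=
    fun x hx hxs => mul_sub_logb_le_mul_sub_logb hx hxs (by linarith [inv_log_two_le_two])
  have step : ∀ x : ℕ, x ≠ 0 → x ≤ s → 1 + x * (d + 2 - logb 2 x) ≤ s * (d + 3 - logb 2 s) := by
    intro x hx hxs
    have hxR : (1 : ℝ) ≤ x := by exact_mod_cast Nat.one_le_iff_ne_zero.2 hx
    linarith [mono x (by linarith) (by exact_mod_cast hxs)]
  unfold leafBound
  rw [if_neg hs₀]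
  push_cast
  split_ifs with h₁ h₂ h₂
  · nlinarith
  · linarith [step s₂ h₂ (by omega)]
  · linarith [step s₁ h₁ (by omega)]
  · have hx : (0 : ℝ) < s₁ := by exact_mod_cast Nat.pos_of_ne_zero h₁
    have hy : (0 : ℝ) < s₂ := by exact_mod_cast Nat.pos_of_ne_zero h₂
    have := mul_sub_logb_add_le (d + 2) hx hy
    have := mono (s₁ + s₂) (by positivity) (by exact_mod_cast hs)
    linarith

/-- The pieces `(p.1, p.2)`, standing for `[p.1, p.2]`, of the dyadic refinement of `[a, b]` that
keeps splitting while a piece contains some `c ∈ S` together with `c + 1`. -/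
def dyadicPieces (S : Finset ℕ) (a b : ℕ) : Finset (ℕ × ℕ) :=
  if h : (S ∩ Ico a b).Nonempty then
    dyadicPieces S a (a + (b - a) / 2) ∪ dyadicPieces S (a + (b - a) / 2 + 1) b
  else {(a, b)}
termination_by b - a
decreasing_by all_goals obtain ⟨c, hc⟩ := h; simp only [mem_inter, mem_Ico] at hc; omega

lemma mem_dyadicPieces {S : Finset ℕ} {a b : ℕ} (hab : a ≤ b) {p : ℕ × ℕ}
    (hp : p ∈ dyadicPieces S a b) :
    a ≤ p.1 ∧ p.1 ≤ p.2 ∧ p.2 ≤ b ∧ S ∩ Ico p.1 p.2 = ∅ := by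
  fun_induction dyadicPieces S a b with
  | case1 a b h ih₁ ih₂ =>
    obtain ⟨c, hc⟩ := h
    simp only [mem_inter, mem_Ico] at hc
    rcases mem_union.1 hp with hp | hp
    · obtain ⟨h₁, h₂, h₃, h₄⟩ := ih₁ (by omega) hp
      exact ⟨h₁, h₂, by omega, h₄⟩
    · obtain ⟨h₁, h₂, h₃, h₄⟩ := ih₂ (by omega) hp
      exact ⟨by omega, h₂, h₃, h₄⟩
  | case2 a b h =>
    rw [mem_singleton.1 hp]
    exact ⟨le_rfl, hab, le_rfl, not_nonempty_iff_eq_empty.1 h⟩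

lemma card_dyadicPieces_le {S : Finset ℕ} {a b D : ℕ} (hlen : b - a < 2 ^ D) :
    (#(dyadicPieces S a b) : ℝ) ≤ leafBound D #(S ∩ Ico a b) := by
  fun_induction dyadicPieces S a b generalizing D with
  | case1 a b h ih₁ ih₂ =>
    set m := a + (b - a) / 2
    obtain ⟨c, hc⟩ := h
    simp only [mem_inter, mem_Ico] at hc
    obtain ⟨d, rfl⟩ : ∃ d, D = d + 1 := Nat.exists_eq_add_one.2 (Nat.pos_of_ne_zero (by
      rintro rfl; omega))
    have hsplit : #(S ∩ Ico a m) + #(S ∩ Ico (m + 1) b) ≤ #(S ∩ Ico a b) := by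
      rw [← card_union_of_disjoint]
      · refine card_le_card (union_subset ?_ ?_) <;>
          exact inter_subset_inter_left (Ico_subset_Ico (by omega) (by omega))
      · exact disjoint_left.2 fun x hx₁ hx₂ => by simp only [mem_inter, mem_Ico] at hx₁ hx₂; omega
    have hs : #(S ∩ Ico a b) ≠ 0 := (card_pos.2 ⟨c, by simp [hc]⟩).ne'
    have hlog : logb 2 #(S ∩ Ico a b) ≤ d + 1 := by
      have hle : #(S ∩ Ico a b) ≤ 2 ^ (d + 1) :=
        (card_le_card inter_subset_right).trans (by rw [Nat.card_Ico]; omega)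
      calc logb 2 #(S ∩ Ico a b) ≤ logb 2 ((2 : ℝ) ^ (d + 1)) :=
            logb_le_logb_of_le one_lt_two (by exact_mod_cast Nat.pos_of_ne_zero hs)
              (by exact_mod_cast hle)
        _ = d + 1 := by rw [logb_pow, logb_self_eq_one one_lt_two]; push_cast; ring
    calc (#(dyadicPieces S a m ∪ dyadicPieces S (m + 1) b) : ℝ)
        ≤ #(dyadicPieces S a m) + #(dyadicPieces S (m + 1) b) := by
          exact_mod_cast card_union_le _ _
      _ ≤ leafBound d #(S ∩ Ico a m) + leafBound d #(S ∩ Ico (m + 1) b) := by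
          gcongr
          · exact ih₁ (by rw [pow_succ] at hlen; omega)
          · exact ih₂ (by rw [pow_succ] at hlen; omega)
      _ ≤ leafBound (d + 1) #(S ∩ Ico a b) := leafBound_add_le hsplit hs hlog
  | case2 a b h =>
    rw [not_nonempty_iff_eq_empty.1 h]
    simp [leafBound]

def pieceSet (n : ℕ) (p : ℕ × ℕ) : Set (Fin n) := Fin.val ⁻¹' Set.Icc p.1 p.2

variable {n : ℕ}

lemma _root_.IsRDP1.pairwiseDisjoint {P : Finset (Set (Fin n))} (hP : IsRDP1 n P) :
    (P : Set (Set (Fin n))).PairwiseDisjoint id := by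
  induction hP with
  | triv => simp
  | split P I I₁ I₂ _ hI hs ih =>
    obtain ⟨a, b, -, -, rfl, rfl⟩ := hs
    have hdisj : ∀ J ∈ P.erase I, Disjoint I J := fun J hJ =>
      ih hI (mem_of_mem_erase hJ) (ne_of_mem_erase hJ).symm
    simp only [coe_insert]
    refine ((ih.subset (coe_subset.2 (erase_subset I P))).insert fun J hJ _ =>
      (hdisj J hJ).mono_left Set.sdiff_subset).insert fun J hJ _ => ?_
    rcases Set.mem_insert_iff.1 hJ with rfl | hJ
    · exact Set.disjoint_sdiff_right
    · exact (hdisj J hJ).mono_left (Set.sep_subset _ _)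

lemma _root_.IsRDP1.notMem_of_subset {P : Finset (Set (Fin n))} {I J : Set (Fin n)}
    (hP : IsRDP1 n (insert I P)) (hI : I ∉ P) (hJI : J ⊆ I) (hJ : J.Nonempty) : J ∉ P := by
  intro hJP
  have hdisj : Disjoint I J := hP.pairwiseDisjoint (by simp) (by simp [hJP])
    (ne_of_mem_of_not_mem hJP hI).symm
  obtain ⟨x, hx⟩ := hJ
  exact Set.disjoint_left.1 hdisj (hJI hx) hx

lemma mem_pieceSet {p : ℕ × ℕ} {x : Fin n} : x ∈ pieceSet n p ↔ p.1 ≤ x ∧ x ≤ p.2 :=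
  Iff.rfl

lemma isDyadicSplit1_pieceSet {a b : ℕ} (hab : a < b) (hb : b < n) :
    IsDyadicSplit1 (pieceSet n (a, b)) (pieceSet n (a, a + (b - a) / 2))
      (pieceSet n (a + (b - a) / 2 + 1, b)) := by
  refine ⟨⟨a, by omega⟩, ⟨b, hb⟩, hab, ?_, ?_, ?_⟩ <;> ext x <;>
    simp only [mem_pieceSet, Set.mem_Icc, Set.mem_ofPred_eq, Set.mem_sdiff, Fin.le_def] <;> omega

lemma isRDP1_union_dyadicPieces (S : Finset ℕ) {a b : ℕ} (hab : a ≤ b) (hb : b < n)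
    {P : Finset (Set (Fin n))} (hI : pieceSet n (a, b) ∉ P)
    (hP : IsRDP1 n (insert (pieceSet n (a, b)) P)) :
    IsRDP1 n (P ∪ (dyadicPieces S a b).image (pieceSet n)) := by
  fun_induction dyadicPieces S a b generalizing P with
  | case1 a b h ih₁ ih₂ =>
    set m := a + (b - a) / 2
    obtain ⟨c, hc⟩ := h
    simp only [mem_inter, mem_Ico] at hc
    have hsplit := isDyadicSplit1_pieceSet (n := n) (show a < b by omega) hb
    have ha₁ : (⟨a, by omega⟩ : Fin n) ∈ pieceSet n (a, m) :=
      mem_pieceSet.2 ⟨le_rfl, show a ≤ m by omega⟩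
    have hb₂ : (⟨b, hb⟩ : Fin n) ∈ pieceSet n (m + 1, b) :=
      mem_pieceSet.2 ⟨show m + 1 ≤ b by omega, le_rfl⟩
    have hsub₁ : pieceSet n (a, m) ⊆ pieceSet n (a, b) := fun x hx => by
      simp only [mem_pieceSet] at hx ⊢; omega
    have hsub₂ : pieceSet n (m + 1, b) ⊆ pieceSet n (a, b) := fun x hx => by
      simp only [mem_pieceSet] at hx ⊢; omega
    have h₁₂ : pieceSet n (a, m) ≠ pieceSet n (m + 1, b) := fun h => by
      have : m + 1 ≤ a := (mem_pieceSet.1 (h ▸ ha₁)).1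
      omega
    have h₂D₁ : pieceSet n (m + 1, b) ∉ (dyadicPieces S a m).image (pieceSet n) := by
      simp only [mem_image, not_exists, not_and]
      intro p hp hpI
      have : b ≤ p.2 := (mem_pieceSet.1 (hpI ▸ hb₂)).2
      have := (mem_dyadicPieces (by omega) hp).2.2.1
      omega
    have hsplitP := IsRDP1.split _ _ _ _ hP (mem_insert_self _ _) hsplit
    rw [erase_insert hI] at hsplitP
    have step₁ := ih₁ (by omega) (by omega) (P := insert (pieceSet n (m + 1, b)) P)
      (by simp [h₁₂, hP.notMem_of_subset hI hsub₁ ⟨_, ha₁⟩]) hsplitP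
    rw [insert_union] at step₁
    have step₂ := ih₂ (by omega) hb
      (by simp [h₂D₁, hP.notMem_of_subset hI hsub₂ ⟨_, hb₂⟩]) step₁
    rwa [image_union, ← union_assoc]
  | case2 a b h =>
    rwa [image_singleton, union_comm, ← insert_eq]

noncomputable def rightEnd (J : Set (Fin n)) : ℕ := sSup (Fin.val '' J)

lemma rightEnd_Icc {p q : Fin n} (h : p ≤ q) : rightEnd (Set.Icc p q) = q := by
  rw [rightEnd, Fin.image_val_Icc, csSup_Icc (Fin.le_def.1 h)]

variable {P : Finset (Set (Fin n))}

lemma _root_.IsIntervalPartition.exists_eq_Icc (hP : IsIntervalPartition P) {J : Set (Fin n)}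
    (hJ : J ∈ P) : ∃ p q, p ≤ q ∧ J = Set.Icc p q := by
  obtain ⟨hne, p, q, rfl⟩ := hP.1 J hJ
  exact ⟨p, q, Set.nonempty_Icc.1 hne, rfl⟩

lemma _root_.IsIntervalPartition.exists_mem (hP : IsIntervalPartition P) (x : Fin n) :
    ∃ J ∈ P, x ∈ J := by
  have hx : x ∈ ⋃ I ∈ P, I := hP.2.2 ▸ Set.mem_univ x
  simpa only [Set.mem_iUnion₂, exists_prop] using hx

lemma _root_.IsIntervalPartition.card_pos (hP : IsIntervalPartition P) (hn : 1 ≤ n) : 0 < #P := by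
  obtain ⟨J, hJ, -⟩ := hP.exists_mem ⟨0, hn⟩
  exact Finset.card_pos.2 ⟨J, hJ⟩

lemma _root_.IsIntervalPartition.card_le (hP : IsIntervalPartition P) : #P ≤ n := by
  have hinj : Set.InjOn rightEnd (P : Set (Set (Fin n))) := by
    intro J hJ J' hJ' h
    obtain ⟨p, q, hpq, rfl⟩ := hP.exists_eq_Icc hJ
    obtain ⟨p', q', hpq', rfl⟩ := hP.exists_eq_Icc hJ'
    rw [rightEnd_Icc hpq, rightEnd_Icc hpq', Fin.val_inj] at h
    by_contra hne
    subst h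
    exact Set.disjoint_left.1 (hP.2.1 _ hJ _ hJ' hne) ⟨hpq, le_rfl⟩ ⟨hpq', le_rfl⟩
  calc #P = #(P.image rightEnd) := (card_image_of_injOn hinj).symm
    _ ≤ #(range n) := card_le_card fun c hc => by
        obtain ⟨J, hJ, rfl⟩ := mem_image.1 hc
        obtain ⟨p, q, hpq, rfl⟩ := hP.exists_eq_Icc hJ
        simp [rightEnd_Icc hpq]
    _ = n := card_range n

lemma _root_.IsIntervalPartition.one_le_exp_mul_div (hP : IsIntervalPartition P) (hn : 1 ≤ n) :
    1 ≤ exp 1 * n / #P := by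
  have hk : (0 : ℝ) < #P := by exact_mod_cast hP.card_pos hn
  rw [le_div_iff₀ hk, one_mul]
  calc (#P : ℝ) ≤ 1 * n := by rw [one_mul]; exact_mod_cast hP.card_le
    _ ≤ exp 1 * n := by gcongr; exact one_le_exp zero_le_one

lemma _root_.IsIntervalPartition.exists_superset_pieceSet (hP : IsIntervalPartition P) {u v : ℕ}
    (huv : u ≤ v) (hv : v < n) (hcut : P.image rightEnd ∩ Ico u v = ∅) :
    ∃ J ∈ P, pieceSet n (u, v) ⊆ J := by
  obtain ⟨J, hJ, hu⟩ := hP.exists_mem ⟨u, by omega⟩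
  obtain ⟨p, q, hpq, rfl⟩ := hP.exists_eq_Icc hJ
  have hq : (q : ℕ) ∉ Ico u v := fun hq =>
    (eq_empty_iff_forall_notMem.1 hcut) q (mem_inter.2 ⟨mem_image.2 ⟨_, hJ, rightEnd_Icc hpq⟩, hq⟩)
  simp only [Set.mem_Icc, Fin.le_def, mem_Ico] at hu hq
  refine ⟨_, hJ, fun x hx => ?_⟩
  simp only [mem_pieceSet, Set.mem_Icc, Fin.le_def] at hx ⊢
  omega

lemma clog_two_le_logb_add_one (hn : 1 ≤ n) : (Nat.clog 2 n : ℝ) ≤ logb 2 n + 1 := by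
  have h := Nat.ceil_lt_add_one (R := ℝ)
    (logb_nonneg one_lt_two (show (1 : ℝ) ≤ n by exact_mod_cast hn))
  have h2 := natCeil_logb_natCast 2 n
  push_cast at h2
  rw [h2] at h
  exact h.le

lemma leafBound_le {D s k : ℕ} (hD : (D : ℝ) ≤ logb 2 n + 1) (hsk : s ≤ k) (hk : 0 < k)
    (hkn : k ≤ n) : leafBound D s ≤ 3 * k * logb 2 (exp 1 * n / k) := by
  have hkR : (1 : ℝ) ≤ k := by exact_mod_cast hk
  have hknR : (k : ℝ) ≤ n := by exact_mod_cast hkn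
  have hlog : logb 2 k ≤ logb 2 n := logb_le_logb_of_le one_lt_two (by positivity) hknR
  have hinv : 1 ≤ (log 2)⁻¹ := one_le_inv₀ (log_pos one_lt_two) |>.2 (by linarith [log_two_lt_d9])
  have hE : logb 2 (exp 1 * n / k) = (log 2)⁻¹ + (logb 2 n - logb 2 k) := by
    have hk0 : (k : ℝ) ≠ 0 := by positivity
    have hn0 : (n : ℝ) ≠ 0 := by linarith
    rw [logb_div (mul_ne_zero (exp_ne_zero 1) hn0) hk0, logb_mul (exp_ne_zero 1) hn0, logb,
      log_exp, one_div]
    ring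
  rw [hE]
  unfold leafBound
  split_ifs with hs
  · nlinarith
  have hsR : (0 : ℝ) < s := by exact_mod_cast Nat.pos_of_ne_zero hs
  calc s * (D + 2 - logb 2 s) ≤ s * (logb 2 n + 3 - logb 2 s) :=
        mul_le_mul_of_nonneg_left (by linarith) hsR.le
    _ ≤ k * (logb 2 n + 3 - logb 2 k) := mul_sub_logb_le_mul_sub_logb hsR (by exact_mod_cast hsk)
        (by linarith [inv_log_two_le_two])
    _ ≤ 3 * k * ((log 2)⁻¹ + (logb 2 n - logb 2 k)) := by nlinarith

theorem exists_isRDP1_refines (hn : 1 ≤ n) (hP : IsIntervalPartition P) :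
    ∃ Q : Finset (Set (Fin n)), IsRDP1 n Q ∧ (∀ I ∈ Q, ∃ J ∈ P, I ⊆ J) ∧
      (#Q : ℝ) ≤ 3 * #P * logb 2 (exp 1 * n / #P) := by
  set S := P.image rightEnd
  have huniv : pieceSet n (0, n - 1) = Set.univ :=
    Set.eq_univ_of_forall fun x => mem_pieceSet.2 ⟨Nat.zero_le _, by omega⟩
  refine ⟨(dyadicPieces S 0 (n - 1)).image (pieceSet n), ?_, ?_, ?_⟩
  · have h := isRDP1_union_dyadicPieces S (Nat.zero_le _) (by omega)
      (notMem_empty (pieceSet n (0, n - 1))) (by rw [insert_empty, huniv]; exact IsRDP1.triv)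
    rwa [empty_union] at h
  · intro I hI
    obtain ⟨p, hp, rfl⟩ := mem_image.1 hI
    obtain ⟨-, hp₁, hp₂, hp₃⟩ := mem_dyadicPieces (Nat.zero_le _) hp
    exact hP.exists_superset_pieceSet hp₁ (by omega) hp₃
  · calc (#((dyadicPieces S 0 (n - 1)).image (pieceSet n)) : ℝ)
        ≤ #(dyadicPieces S 0 (n - 1)) := by exact_mod_cast card_image_le
      _ ≤ leafBound (Nat.clog 2 n) #(S ∩ Ico 0 (n - 1)) :=
          card_dyadicPieces_le (by have := Nat.le_pow_clog one_lt_two n; omega)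
      _ ≤ 3 * #P * logb 2 (exp 1 * n / #P) :=
          leafBound_le (clog_two_le_logb_add_one hn)
            ((card_le_card inter_subset_left).trans card_image_le) (hP.card_pos hn) hP.card_le

lemma _root_.IsPolyOn1.mono {r : ℕ} {θ : Fin n → ℝ} {I J : Set (Fin n)} (h : IsPolyOn1 r θ J)
    (hIJ : I ⊆ J) : IsPolyOn1 r θ I :=
  let ⟨f, hf, hθ⟩ := h
  ⟨f, hf, fun x hx => hθ x (hIJ hx)⟩

lemma exists_isIntervalPartition_isPolyOn1 (r : ℕ) (θ : Fin n → ℝ) :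
    ∃ P : Finset (Set (Fin n)), IsIntervalPartition P ∧ ∀ I ∈ P, IsPolyOn1 r θ I := by
  refine ⟨univ.image fun x => {x}, ⟨?_, ?_, ?_⟩, ?_⟩
  · simp only [mem_image, mem_univ, true_and, forall_exists_index, forall_apply_eq_imp_iff]
    exact fun x => ⟨Set.singleton_nonempty x, x, x, Set.Icc_self x |>.symm⟩
  · simp only [mem_image, mem_univ, true_and, forall_exists_index, forall_apply_eq_imp_iff]
    exact fun x y hxy => Set.disjoint_singleton.2 fun h => hxy (h ▸ rfl)
  · exact Set.eq_univ_of_forall fun x => Set.mem_iUnion₂.2 ⟨{x}, by simp, rfl⟩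
  · simp only [mem_image, mem_univ, true_and, forall_exists_index, forall_apply_eq_imp_iff]
    exact fun x => ⟨Polynomial.C (θ x), by simp, fun y hy => by simp [Set.mem_singleton_iff.1 hy]⟩

theorem kRdp1_le (hn : 1 ≤ n) (θ : Fin n → ℝ) (r : ℕ) :
    (kRdp1 r θ : ℝ) ≤ 5 * kAll1 r θ * log (exp 1 * n / kAll1 r θ) := by
  obtain ⟨P₀, hP₀, hpoly₀⟩ := exists_isIntervalPartition_isPolyOn1 r θ
  have hne : {k | ∃ P : Finset (Set (Fin n)),
      IsIntervalPartition P ∧ (∀ I ∈ P, IsPolyOn1 r θ I) ∧ #P = k}.Nonempty :=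
    ⟨_, P₀, hP₀, hpoly₀, rfl⟩
  obtain ⟨P, hP, hpoly, hk : #P = kAll1 r θ⟩ := Nat.sInf_mem hne
  obtain ⟨Q, hQ, hQP, hQcard⟩ := exists_isRDP1_refines hn hP
  have hkQ : kRdp1 r θ ≤ #Q := Nat.sInf_le ⟨Q, hQ, fun I hI =>
    let ⟨J, hJ, hIJ⟩ := hQP I hI
    (hpoly J hJ).mono hIJ, rfl⟩
  rw [← hk]
  have hlog : 0 ≤ log (exp 1 * n / #P) := log_nonneg (hP.one_le_exp_mul_div hn)
  have h3 : 3 * logb 2 (exp 1 * n / #P) ≤ 5 * log (exp 1 * n / #P) := by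
    rw [logb, ← mul_div_assoc, div_le_iff₀ (log_pos one_lt_two)]
    nlinarith [log_two_gt_d9]
  calc (kRdp1 r θ : ℝ) ≤ #Q := by exact_mod_cast hkQ
    _ ≤ 3 * #P * logb 2 (exp 1 * n / #P) := hQcard
    _ = #P * (3 * logb 2 (exp 1 * n / #P)) := by ring
    _ ≤ #P * (5 * log (exp 1 * n / #P)) := by gcongr
    _ = 5 * #P * log (exp 1 * n / #P) := by ring

end DyadicRefinement

/-- (Any interval partition of `{1,…,n}` with `k` intervals can be refined
into a recursive dyadic partition with at most `C k log₂(en/k)` intervals; consequently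
`k^(r)_rdp(θ) ≤ C k^(r)_all(θ) log(en/k^(r)_all(θ))`. Lemma 8.3 of the paper). -/
theorem statement8 :
    ∃ C : ℝ, 0 < C ∧ ∀ n : ℕ, 1 ≤ n →
      (∀ P : Finset (Set (Fin n)), IsIntervalPartition P →
        ∃ Q : Finset (Set (Fin n)), IsRDP1 n Q ∧
          (∀ I ∈ Q, ∃ J ∈ P, I ⊆ J) ∧
          (Q.card : ℝ) ≤ C * P.card * Real.logb 2 (Real.exp 1 * n / P.card)) ∧
      ∀ (θ : Fin n → ℝ) (r : ℕ),
        (kRdp1 r θ : ℝ)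
          ≤ C * (kAll1 r θ : ℝ) * Real.log (Real.exp 1 * n / (kAll1 r θ : ℝ)) := by
  refine ⟨5, by norm_num, fun n hn => ⟨fun P hP => ?_, DyadicRefinement.kRdp1_le hn⟩⟩
  obtain ⟨Q, hQ, hQP, hQcard⟩ := DyadicRefinement.exists_isRDP1_refines hn hP
  have hL := Real.logb_nonneg one_lt_two (hP.one_le_exp_mul_div hn)
  exact ⟨Q, hQ, hQP, hQcard.trans (by gcongr; norm_num)⟩
end

section
/- Let n = 2^k for a positive integer k. A rectangular partition Π of L_{2,n} = {1,...,n}² is a recursive dyadic partition if and only if each rectangle constituting Π is a product of two dyadic intervals of {1,...,n}. -/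
open MeasureTheory ProbabilityTheory BigOperators

attribute [local instance] Classical.propDecidable

noncomputable section

/-- An (axis-aligned, nonempty) rectangle in the lattice. -/
def IsRect {d n : ℕ} (R : Set (Grid d n)) : Prop :=
  R.Nonempty ∧ ∃ a b : Fin d → Fin n, R = {x | ∀ i, a i ≤ x i ∧ x i ≤ b i}

/-- A rectangular partition of the lattice. -/
def IsPartition {d n : ℕ} (P : Finset (Set (Grid d n))) : Prop :=
  (∀ R ∈ P, IsRect R) ∧ (∀ R ∈ P, ∀ R' ∈ P, R ≠ R' → Disjoint R R') ∧
    (⋃ R ∈ P, R) = Set.univ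

/-- A hierarchical split of the rectangle `R` into `R₁` and `R₂`. -/
def IsHierSplit {d n : ℕ} (R R₁ R₂ : Set (Grid d n)) : Prop :=
  ∃ (j : Fin d) (ℓ : Fin n),
    R₁ = {x ∈ R | x j ≤ ℓ} ∧ R₂ = {x ∈ R | ℓ < x j} ∧ R₁.Nonempty ∧ R₂.Nonempty

/-- A dyadic split (split at the midpoint) of the rectangle `R` into `R₁` and `R₂`. -/
def IsDyadicSplit {d n : ℕ} (R R₁ R₂ : Set (Grid d n)) : Prop :=
  ∃ (a b : Fin d → Fin n) (j : Fin d),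
    (∀ i, a i ≤ b i) ∧ a j < b j ∧
    R = {x | ∀ i, a i ≤ x i ∧ x i ≤ b i} ∧
    R₁ = {x ∈ R | (x j : ℕ) ≤ (a j : ℕ) + ((b j : ℕ) - (a j : ℕ)) / 2} ∧
    R₂ = R \ R₁

/-- Hierarchical partitions: partitions reachable from the trivial partition by
finitely many hierarchical splits. -/
inductive IsHierPartition (d n : ℕ) : Finset (Set (Grid d n)) → Prop where
  | triv : IsHierPartition d n {Set.univ}
  | split (P : Finset (Set (Grid d n))) (R R₁ R₂ : Set (Grid d n)) :
      IsHierPartition d n P → R ∈ P → IsHierSplit R R₁ R₂ →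
      IsHierPartition d n (insert R₁ (insert R₂ (P.erase R)))

/-- Recursive dyadic partitions: partitions reachable from the trivial partition by
finitely many dyadic splits. -/
inductive IsRDPPartition (d n : ℕ) : Finset (Set (Grid d n)) → Prop where
  | triv : IsRDPPartition d n {Set.univ}
  | split (P : Finset (Set (Grid d n))) (R R₁ R₂ : Set (Grid d n)) :
      IsRDPPartition d n P → R ∈ P → IsDyadicSplit R R₁ R₂ →
      IsRDPPartition d n (insert R₁ (insert R₂ (P.erase R)))

/-- `θ` is a discrete polynomial of total degree at most `r` on the rectangle `R`. -/
def IsPolyOn {d n : ℕ} (r : ℕ) (θ : Grid d n → ℝ) (R : Set (Grid d n)) : Prop :=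
  ∃ f : MvPolynomial (Fin d) ℝ, f.totalDegree ≤ r ∧
    ∀ x ∈ R, θ x = MvPolynomial.eval (fun i => (((x i : ℕ) : ℝ) + 1) / n) f

/-- `k^(r)_all(θ)`. -/
def kAll {d n : ℕ} (r : ℕ) (θ : Grid d n → ℝ) : ℕ :=
  sInf {k | ∃ P : Finset (Set (Grid d n)),
    IsPartition P ∧ (∀ R ∈ P, IsPolyOn r θ R) ∧ P.card = k}

/-- `k^(r)_hier(θ)`. -/
def kHier {d n : ℕ} (r : ℕ) (θ : Grid d n → ℝ) : ℕ :=
  sInf {k | ∃ P : Finset (Set (Grid d n)),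
    IsHierPartition d n P ∧ (∀ R ∈ P, IsPolyOn r θ R) ∧ P.card = k}

/-- `k^(r)_rdp(θ)`. -/
def kRdp {d n : ℕ} (r : ℕ) (θ : Grid d n → ℝ) : ℕ :=
  sInf {k | ∃ P : Finset (Set (Grid d n)),
    IsRDPPartition d n P ∧ (∀ R ∈ P, IsPolyOn r θ R) ∧ P.card = k}


end

/-!
Dyadic intervals are nested or disjoint, and a dyadic split halves a dyadic interval into two
dyadic ones; hence every piece of a recursive dyadic partition is a product of dyadic intervals.

Conversely, let the dyadic box `R` be partitioned into dyadic boxes other than `R` itself. A piece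
that crosses the midline of `R` in direction `j` contains, by nesting, the whole `j`-side of `R`.
In the plane, a piece spanning `R` horizontally and one spanning it vertically meet, so they
coincide and equal `R`, which is excluded. So in some direction no piece crosses the midline:
split `R` there and recurse on the two halves.
-/

theorem Set.sep_univ_pi_eq_univ_pi_update {ι α : Type*} [DecidableEq ι] (I : ι → Set α) (j : ι)
    (p : α → Prop) :
    {x ∈ Set.univ.pi I | p (x j)} = Set.univ.pi (Function.update I j {y ∈ I j | p y}) := by
  ext x
  simp only [Set.mem_ofPred_eq, Set.mem_univ_pi]
  rw [Function.forall_update_iff I (fun i s => x i ∈ s)]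
  grind

theorem Set.not_disjoint_of_subset {α : Type*} {s t : Set α} (hs : s.Nonempty) (hst : s ⊆ t) :
    ¬ Disjoint s t :=
  fun h => hs.ne_empty (h.eq_bot_of_le hst)

theorem Finset.biUnion_filter_subset_eq {α : Type*} {Q : Finset (Set α)} {R₁ R₂ : Set α}
    (hcover : ⋃ S ∈ Q, S = R₁ ∪ R₂) (hdisj : Disjoint R₁ R₂) (hQ : ∀ S ∈ Q, S ⊆ R₁ ∨ S ⊆ R₂) :
    ⋃ S ∈ Q.filter (· ⊆ R₁), S = R₁ := by
  refine Set.Subset.antisymm (Set.iUnion₂_subset fun S hS => (Finset.mem_filter.1 hS).2)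
    fun x hx => ?_
  have hx' : x ∈ ⋃ S ∈ Q, S := by
    rw [hcover]
    exact Or.inl hx
  obtain ⟨S, hS, hxS⟩ := Set.mem_iUnion₂.1 hx'
  refine Set.mem_biUnion (Finset.mem_filter.2 ⟨hS, (hQ S hS).resolve_right fun h => ?_⟩) hxS
  exact Set.disjoint_left.1 hdisj hx (h hxS)

section DyadicInterval

variable {n : ℕ}

def dyadicInterval (n s c : ℕ) : Set (Fin n) := {x | (x : ℕ) / 2 ^ s = c}

theorem mem_dyadicInterval {s c : ℕ} {x : Fin n} :
    x ∈ dyadicInterval n s c ↔ c * 2 ^ s ≤ x ∧ (x : ℕ) < c * 2 ^ s + 2 ^ s := by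
  have := Nat.two_pow_pos s
  rw [dyadicInterval, Set.mem_ofPred_eq, Nat.div_eq_iff this]
  omega

theorem isDyadicInterval_iff {I : Set (Fin n)} :
    IsDyadicInterval n I ↔ ∃ s c, (c + 1) * 2 ^ s ≤ n ∧ I = dyadicInterval n s c := by
  constructor
  · rintro ⟨s, a, ha, han, rfl⟩
    obtain ⟨c, rfl⟩ := Nat.exists_eq_add_of_le' ha
    refine ⟨s, c, han, ?_⟩
    ext x
    rw [mem_dyadicInterval, Nat.add_sub_cancel, Set.mem_ofPred_eq, add_one_mul]
  · rintro ⟨s, c, hcn, rfl⟩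
    refine ⟨s, c + 1, le_add_self, hcn, ?_⟩
    ext x
    rw [mem_dyadicInterval, Nat.add_sub_cancel, Set.mem_ofPred_eq, add_one_mul]

theorem dyadicInterval_eq_Icc {s c : ℕ} (h : (c + 1) * 2 ^ s ≤ n) :
    dyadicInterval n s c =
      Set.Icc (⟨c * 2 ^ s, by grind⟩ : Fin n) ⟨c * 2 ^ s + 2 ^ s - 1, by grind⟩ := by
  ext x
  simp only [mem_dyadicInterval, Set.mem_Icc, Fin.le_def]
  have := Nat.two_pow_pos s
  omega

theorem dyadicInterval_subset_of_le {s t c e : ℕ} (hst : s ≤ t)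
    (hce : (dyadicInterval n s c ∩ dyadicInterval n t e).Nonempty) :
    dyadicInterval n s c ⊆ dyadicInterval n t e := by
  have div_eq (x : Fin n) : (x : ℕ) / 2 ^ t = (x : ℕ) / 2 ^ s / 2 ^ (t - s) := by
    rw [Nat.div_div_eq_div_mul, ← pow_add, Nat.add_sub_cancel' hst]
  obtain ⟨x, hxs, hxt⟩ := hce
  intro y hy
  simp only [dyadicInterval, Set.mem_ofPred_eq] at hxs hxt hy ⊢
  rw [← hxt, div_eq, div_eq, hxs, hy]

namespace IsDyadicInterval

variable {I J : Set (Fin n)}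

theorem nonempty (hI : IsDyadicInterval n I) : I.Nonempty := by
  obtain ⟨s, c, hcn, rfl⟩ := isDyadicInterval_iff.1 hI
  rw [dyadicInterval_eq_Icc hcn]
  exact Set.nonempty_Icc.2 (by simp only [Fin.le_def]; grind)

theorem exists_eq_Icc (hI : IsDyadicInterval n I) :
    ∃ lo hi : Fin n, lo ≤ hi ∧ I = Set.Icc lo hi := by
  obtain ⟨s, c, hcn, rfl⟩ := isDyadicInterval_iff.1 hI
  exact ⟨_, _, by simp only [Fin.le_def]; grind, dyadicInterval_eq_Icc hcn⟩

theorem subset_or_subset (hI : IsDyadicInterval n I) (hJ : IsDyadicInterval n J)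
    (hIJ : (I ∩ J).Nonempty) : I ⊆ J ∨ J ⊆ I := by
  obtain ⟨s, c, -, rfl⟩ := isDyadicInterval_iff.1 hI
  obtain ⟨t, e, -, rfl⟩ := isDyadicInterval_iff.1 hJ
  rcases le_total s t with hst | hts
  · exact Or.inl (dyadicInterval_subset_of_le hst hIJ)
  · exact Or.inr (dyadicInterval_subset_of_le hts (Set.inter_comm _ _ ▸ hIJ))

theorem halves (hI : IsDyadicInterval n I) {lo hi : Fin n} (hIcc : I = Set.Icc lo hi)
    (hlt : lo < hi) :
    IsDyadicInterval n {x ∈ I | (x : ℕ) ≤ (lo : ℕ) + ((hi : ℕ) - (lo : ℕ)) / 2} ∧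
      IsDyadicInterval n {x ∈ I | ¬ (x : ℕ) ≤ (lo : ℕ) + ((hi : ℕ) - (lo : ℕ)) / 2} := by
  obtain ⟨s, c, hcn, rfl⟩ := isDyadicInterval_iff.1 hI
  obtain ⟨hlo, hhi⟩ := (Set.Icc_eq_Icc_iff (by simp only [Fin.le_def]; grind)).1
    ((dyadicInterval_eq_Icc hcn).symm.trans hIcc)
  rw [Fin.lt_def, ← hlo, ← hhi] at hlt
  rw [← hlo, ← hhi]
  obtain _ | t := s
  · simp at hlt
  have := Nat.two_pow_pos t
  -- everything is linear in the atoms `2 ^ t` and `c * 2 ^ t`, which is all `omega` needs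
  have h₁ : 2 ^ (t + 1) = 2 * 2 ^ t := pow_succ' 2 t
  have h₂ : c * 2 ^ (t + 1) = 2 * (c * 2 ^ t) := by ring
  have h₃ : (2 * c) * 2 ^ t = 2 * (c * 2 ^ t) := by ring
  have h₄ : (2 * c + 1) * 2 ^ t = 2 * (c * 2 ^ t) + 2 ^ t := by ring
  have h₅ : (2 * c + 1 + 1) * 2 ^ t = 2 * (c * 2 ^ t) + 2 * 2 ^ t := by ring
  rw [add_one_mul] at hcn
  refine ⟨isDyadicInterval_iff.2 ⟨t, 2 * c, by omega, ?_⟩,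
    isDyadicInterval_iff.2 ⟨t, 2 * c + 1, by omega, ?_⟩⟩ <;>
  · ext x
    simp only [Set.mem_ofPred_eq, mem_dyadicInterval]
    omega

end IsDyadicInterval

end DyadicInterval

section DyadicBox

variable {d n : ℕ}

def IsDyadicBox (R : Set (Grid d n)) : Prop :=
  ∃ I : Fin d → Set (Fin n), (∀ i, IsDyadicInterval n (I i)) ∧ R = Set.univ.pi I

theorem IsDyadicBox.nonempty {R : Set (Grid d n)} (hR : IsDyadicBox R) : R.Nonempty := by
  obtain ⟨I, hI, rfl⟩ := hR
  exact Set.univ_pi_nonempty_iff.2 fun i => (hI i).nonempty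

theorem isDyadicBox_univ {k : ℕ} (hn : n = 2 ^ k) : IsDyadicBox (Set.univ : Set (Grid d n)) := by
  refine ⟨fun _ => Set.univ, fun _ => isDyadicInterval_iff.2 ⟨k, 0, by simp [hn], ?_⟩,
    Set.pi_univ _ |>.symm⟩
  ext x
  simp [mem_dyadicInterval, ← hn]

theorem isDyadicBox_halves {I : Fin d → Set (Fin n)} (hI : ∀ i, IsDyadicInterval n (I i))
    {a b : Fin d → Fin n} (hIcc : ∀ i, I i = Set.Icc (a i) (b i)) {j : Fin d} (hj : a j < b j) :
    IsDyadicBox {x ∈ Set.univ.pi I | (x j : ℕ) ≤ (a j : ℕ) + ((b j : ℕ) - (a j : ℕ)) / 2} ∧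
      IsDyadicBox (Set.univ.pi I \
        {x ∈ Set.univ.pi I | (x j : ℕ) ≤ (a j : ℕ) + ((b j : ℕ) - (a j : ℕ)) / 2}) := by
  have update_dyadic (L : Set (Fin n)) (hL : IsDyadicInterval n L) (i : Fin d) :
      IsDyadicInterval n (Function.update I j L i) := by
    rcases eq_or_ne i j with rfl | hij
    · rwa [Function.update_self]
    · rw [Function.update_of_ne hij]
      exact hI i
  obtain ⟨hL, hU⟩ := (hI j).halves (hIcc j) hj
  rw [Set.sdiff_sep_self]
  exact ⟨⟨_, update_dyadic _ hL, Set.sep_univ_pi_eq_univ_pi_update I j (fun y => _ ≤ _)⟩,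
    ⟨_, update_dyadic _ hU, Set.sep_univ_pi_eq_univ_pi_update I j (fun y => ¬ _ ≤ _)⟩⟩

end DyadicBox

namespace IsDyadicSplit

variable {d n : ℕ} {R R₁ R₂ : Set (Grid d n)}

theorem subset_left (h : IsDyadicSplit R R₁ R₂) : R₁ ⊆ R := by
  obtain ⟨-, -, -, -, -, -, rfl, -⟩ := h
  exact Set.sep_subset _ _

theorem union_eq (h : IsDyadicSplit R R₁ R₂) : R₁ ∪ R₂ = R := by
  have h₁ := h.subset_left
  obtain ⟨-, -, -, -, -, -, -, rfl⟩ := h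
  exact Set.union_sdiff_cancel h₁

theorem subset_right (h : IsDyadicSplit R R₁ R₂) : R₂ ⊆ R :=
  h.union_eq ▸ Set.subset_union_right

theorem disjoint (h : IsDyadicSplit R R₁ R₂) : Disjoint R₁ R₂ := by
  obtain ⟨-, -, -, -, -, -, -, rfl⟩ := h
  exact Set.disjoint_sdiff_right

theorem nonempty_left (h : IsDyadicSplit R R₁ R₂) : R₁.Nonempty := by
  obtain ⟨a, b, j, hab, -, rfl, rfl, -⟩ := h
  exact ⟨a, fun i => ⟨le_rfl, hab i⟩, Nat.le_add_right _ _⟩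

theorem nonempty_right (h : IsDyadicSplit R R₁ R₂) : R₂.Nonempty := by
  obtain ⟨a, b, j, hab, hj, rfl, rfl, rfl⟩ := h
  refine ⟨b, ⟨fun i => ⟨hab i, le_rfl⟩, fun hb => ?_⟩⟩
  have := hb.2
  rw [Fin.lt_def] at hj
  omega

theorem ssubset_left (h : IsDyadicSplit R R₁ R₂) : R₁ ⊂ R := by
  obtain ⟨x, hx⟩ := h.nonempty_right
  exact (Set.ssubset_iff_of_subset h.subset_left).2
    ⟨x, h.subset_right hx, Set.disjoint_right.1 h.disjoint hx⟩

theorem ssubset_right (h : IsDyadicSplit R R₁ R₂) : R₂ ⊂ R := by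
  obtain ⟨x, hx⟩ := h.nonempty_left
  exact (Set.ssubset_iff_of_subset h.subset_right).2
    ⟨x, h.subset_left hx, Set.disjoint_left.1 h.disjoint hx⟩

theorem isDyadicBox (h : IsDyadicSplit R R₁ R₂) (hR : IsDyadicBox R) :
    IsDyadicBox R₁ ∧ IsDyadicBox R₂ := by
  obtain ⟨a, b, j, hab, hj, hRab, rfl, rfl⟩ := h
  obtain ⟨I, hI, rfl⟩ := hR
  have hIab : Set.univ.pi I = Set.univ.pi fun i => Set.Icc (a i) (b i) := by
    rw [hRab]
    ext x
    simp only [Set.mem_univ_pi, Set.mem_Icc, Set.mem_ofPred_eq]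
  have hne : (Set.univ.pi I).Nonempty := IsDyadicBox.nonempty ⟨I, hI, rfl⟩
  have hIcc (i : Fin d) : I i = Set.Icc (a i) (b i) := by
    rw [← Set.eval_image_univ_pi hne, hIab, Set.eval_image_univ_pi (hIab ▸ hne)]
  exact isDyadicBox_halves hI hIcc hj

end IsDyadicSplit

theorem IsRDPPartition.isDyadicBox {d n : ℕ} {P : Finset (Set (Grid d n))}
    (hP : IsRDPPartition d n P) (huniv : IsDyadicBox (Set.univ : Set (Grid d n))) :
    ∀ R ∈ P, IsDyadicBox R := by
  induction hP with
  | triv => simpa using huniv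
  | split P R R₁ R₂ _ hR hsp ih =>
    obtain ⟨h₁, h₂⟩ := hsp.isDyadicBox (ih R hR)
    intro S hS
    simp only [Finset.mem_insert, Finset.mem_erase] at hS
    rcases hS with rfl | rfl | ⟨-, hS⟩
    exacts [h₁, h₂, ih S hS]

/-- `Q` is obtained from `{R}` by recursive dyadic splits, recorded as a binary tree. -/
inductive IsRDPOf {d n : ℕ} : Set (Grid d n) → Finset (Set (Grid d n)) → Prop
  | refl (R : Set (Grid d n)) : IsRDPOf R {R}
  | split {R R₁ R₂ : Set (Grid d n)} {Q₁ Q₂ : Finset (Set (Grid d n))} :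
      IsDyadicSplit R R₁ R₂ → IsRDPOf R₁ Q₁ → IsRDPOf R₂ Q₂ → IsRDPOf R (Q₁ ∪ Q₂)

section RDP

variable {d n : ℕ}

theorem IsRDPOf.subset {R : Set (Grid d n)} {Q : Finset (Set (Grid d n))} (hQ : IsRDPOf R Q) :
    ∀ S ∈ Q, S ⊆ R := by
  induction hQ with
  | refl R => simp
  | split hsp _ _ ih₁ ih₂ =>
    intro S hS
    rcases Finset.mem_union.1 hS with hS | hS
    exacts [(ih₁ S hS).trans hsp.subset_left, (ih₂ S hS).trans hsp.subset_right]

theorem IsRDPPartition.pairwiseDisjoint {P : Finset (Set (Grid d n))}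
    (hP : IsRDPPartition d n P) : (P : Set (Set (Grid d n))).PairwiseDisjoint id := by
  induction hP with
  | triv => simp
  | split P R R₁ R₂ _ hR hsp ih =>
    have hdisjR (S : Set (Grid d n)) (hS : S ∈ (P : Set (Set (Grid d n))) \ {R}) :
        Disjoint R S :=
      ih hR hS.1 (Ne.symm hS.2)
    rw [Finset.coe_insert, Finset.coe_insert, Finset.coe_erase]
    refine ((ih.subset Set.sdiff_subset).insert fun S hS _ =>
      (hdisjR S hS).mono_left hsp.subset_right).insert fun S hS _ => ?_
    rcases hS with rfl | hS
    exacts [hsp.disjoint, (hdisjR S hS).mono_left hsp.subset_left]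

theorem IsRDPPartition.erase_union {P Q : Finset (Set (Grid d n))} {R : Set (Grid d n)}
    (hP : IsRDPPartition d n P) (hR : R ∈ P) (hQ : IsRDPOf R Q) :
    IsRDPPartition d n (P.erase R ∪ Q) := by
  induction hQ generalizing P with
  | refl R => rwa [Finset.union_singleton, Finset.insert_erase hR]
  | @split R R₁ R₂ Q₁ Q₂ hsp hQ₁ _ ih₁ ih₂ =>
    have not_mem_erase (T : Set (Grid d n)) (hT : T ⊆ R) (hTne : T.Nonempty) : T ∉ P.erase R :=
      fun hTP => Set.not_disjoint_of_subset hTne hT <|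
        hP.pairwiseDisjoint (Finset.mem_of_mem_erase hTP) hR (Finset.ne_of_mem_erase hTP)
    have hR₁ : R₁ ∉ insert R₂ (P.erase R) := by
      rw [Finset.mem_insert, not_or]
      refine ⟨fun h => ?_, not_mem_erase R₁ hsp.subset_left hsp.nonempty_left⟩
      exact Set.not_disjoint_of_subset hsp.nonempty_left h.le hsp.disjoint
    have hR₂ : R₂ ∉ Q₁ := fun h => Set.not_disjoint_of_subset hsp.nonempty_right
      (hQ₁.subset R₂ h) hsp.disjoint.symm
    have h₁ := ih₁ (hP.split P R R₁ R₂ hR hsp) (Finset.mem_insert_self _ _)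
    rw [Finset.erase_insert hR₁] at h₁
    have h₂ := ih₂ h₁ (Finset.mem_union_left _ (Finset.mem_insert_self _ _))
    rwa [Finset.erase_union_distrib, Finset.erase_insert
      (not_mem_erase R₂ hsp.subset_right hsp.nonempty_right),
      Finset.erase_eq_of_notMem hR₂, Finset.union_assoc] at h₂

end RDP

section FullAlong

variable {d n : ℕ}

/-- `S` is a union of whole lines of `R` in direction `j`. -/
def IsFullAlong (R S : Set (Grid d n)) (j : Fin d) : Prop :=
  ∀ x ∈ R, ∀ y ∈ S, Function.update y j (x j) ∈ S

theorem isFullAlong_of_subsingleton {I : Fin d → Set (Fin n)} {S : Set (Grid d n)} {j : Fin d}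
    (hI : (I j).Subsingleton) (hSR : S ⊆ Set.univ.pi I) : IsFullAlong (Set.univ.pi I) S j := by
  intro x hx y hy
  rwa [hI (hx j trivial) (hSR hy j trivial), Function.update_eq_self]

theorem isFullAlong_of_not_subset {I : Fin d → Set (Fin n)} {S : Set (Grid d n)}
    (hS : IsDyadicBox S) (hSR : S ⊆ Set.univ.pi I) {j : Fin d} {p : Fin n → Prop}
    (hL : IsDyadicInterval n {y ∈ I j | p y}) (hU : IsDyadicInterval n {y ∈ I j | ¬ p y})
    (h₁ : ¬ S ⊆ {x ∈ Set.univ.pi I | p (x j)}) (h₂ : ¬ S ⊆ {x ∈ Set.univ.pi I | ¬ p (x j)}) :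
    IsFullAlong (Set.univ.pi I) S j := by
  obtain ⟨J, hJ, rfl⟩ := hS
  obtain ⟨y, hy, hyp⟩ := Set.not_subset.1 h₁
  obtain ⟨z, hz, hzp⟩ := Set.not_subset.1 h₂
  replace hyp : ¬ p (y j) := fun h => hyp ⟨hSR hy, h⟩
  replace hzp : p (z j) := by_contra fun h => hzp ⟨hSR hz, h⟩
  -- the `j`-side of `S` meets both dyadic halves of that of `R`, so contains both
  have hLJ : {y ∈ I j | p y} ⊆ J j :=
    (hL.subset_or_subset (hJ j) ⟨z j, ⟨hSR hz j trivial, hzp⟩, hz j trivial⟩).resolve_right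
      fun h => hyp (h (hy j trivial)).2
  have hUJ : {y ∈ I j | ¬ p y} ⊆ J j :=
    (hU.subset_or_subset (hJ j) ⟨y j, ⟨hSR hy j trivial, hyp⟩, hy j trivial⟩).resolve_right
      fun h => (h (hz j trivial)).2 hzp
  intro x hx w hw
  rw [Set.update_mem_pi_iff_of_mem hw]
  intro _
  by_cases hp : p (x j)
  exacts [hLJ ⟨hx j trivial, hp⟩, hUJ ⟨hx j trivial, hp⟩]

end FullAlong

section Planar

variable {n : ℕ}

theorem IsFullAlong.eq_of_isFullAlong {R S : Set (Grid 2 n)} (h₀ : IsFullAlong R S 0)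
    (h₁ : IsFullAlong R S 1) (hSR : S ⊆ R) (hS : S.Nonempty) : S = R := by
  refine hSR.antisymm fun x hx => ?_
  obtain ⟨y, hy⟩ := hS
  convert h₁ x hx _ (h₀ x hx y hy)
  ext i
  fin_cases i <;> simp

theorem IsFullAlong.inter_nonempty {R A B : Set (Grid 2 n)} (hA : IsFullAlong R A 0)
    (hB : IsFullAlong R B 1) (hAR : A ⊆ R) (hBR : B ⊆ R) (hAne : A.Nonempty)
    (hBne : B.Nonempty) : (A ∩ B).Nonempty := by
  obtain ⟨a, ha⟩ := hAne
  obtain ⟨b, hb⟩ := hBne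
  refine ⟨Function.update a 0 (b 0), hA b (hBR hb) a ha, ?_⟩
  convert hB a (hAR ha) b hb using 1
  ext i
  fin_cases i <;> simp

theorem exists_forall_not_isFullAlong {R : Set (Grid 2 n)} {Q : Finset (Set (Grid 2 n))}
    (hQR : ∀ S ∈ Q, S ⊆ R) (hQne : ∀ S ∈ Q, S.Nonempty)
    (hdisj : (Q : Set (Set (Grid 2 n))).PairwiseDisjoint id) (hRQ : R ∉ Q) :
    ∃ j, ∀ S ∈ Q, ¬ IsFullAlong R S j := by
  by_contra! h
  obtain ⟨A, hA, hA₀⟩ := h 0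
  obtain ⟨B, hB, hB₁⟩ := h 1
  have hAB : A = B := by_contra fun hne => Set.not_disjoint_iff_nonempty_inter.2
    (hA₀.inter_nonempty hB₁ (hQR A hA) (hQR B hB) (hQne A hA) (hQne B hB)) (hdisj hA hB hne)
  subst hAB
  exact hRQ (hA₀.eq_of_isFullAlong hB₁ (hQR A hA) (hQne A hA) ▸ hA)

theorem IsDyadicBox.exists_isDyadicSplit {R : Set (Grid 2 n)} (hR : IsDyadicBox R)
    {Q : Finset (Set (Grid 2 n))} (hQ : ∀ S ∈ Q, IsDyadicBox S) (hQR : ∀ S ∈ Q, S ⊆ R)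
    (hdisj : (Q : Set (Set (Grid 2 n))).PairwiseDisjoint id) (hRQ : R ∉ Q) (hQne : Q.Nonempty) :
    ∃ R₁ R₂, IsDyadicSplit R R₁ R₂ ∧ IsDyadicBox R₁ ∧ IsDyadicBox R₂ ∧
      ∀ S ∈ Q, S ⊆ R₁ ∨ S ⊆ R₂ := by
  obtain ⟨j, hj⟩ := exists_forall_not_isFullAlong hQR (fun S hS => (hQ S hS).nonempty) hdisj hRQ
  obtain ⟨I, hI, rfl⟩ := hR
  choose a b hab hIcc using fun i => (hI i).exists_eq_Icc
  have hlt : a j < b j := by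
    obtain ⟨S, hS⟩ := hQne
    refine (hab j).lt_of_ne fun h => hj S hS (isFullAlong_of_subsingleton ?_ (hQR S hS))
    rw [hIcc j, h, Set.Icc_self]
    exact Set.subsingleton_singleton
  have hsplit : IsDyadicSplit (Set.univ.pi I)
      {x ∈ Set.univ.pi I | (x j : ℕ) ≤ (a j : ℕ) + ((b j : ℕ) - (a j : ℕ)) / 2}
      (Set.univ.pi I \
        {x ∈ Set.univ.pi I | (x j : ℕ) ≤ (a j : ℕ) + ((b j : ℕ) - (a j : ℕ)) / 2}) := by
    refine ⟨a, b, j, hab, hlt, ?_, rfl, rfl⟩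
    ext x
    simp only [Set.mem_univ_pi, hIcc, Set.mem_Icc, Set.mem_ofPred_eq]
  obtain ⟨hL, hU⟩ := (hI j).halves (hIcc j) hlt
  obtain ⟨h₁, h₂⟩ := isDyadicBox_halves hI hIcc hlt
  refine ⟨_, _, hsplit, h₁, h₂, fun S hS => ?_⟩
  by_contra! h
  rw [Set.sdiff_sep_self] at h
  exact hj S hS (isFullAlong_of_not_subset (hQ S hS) (hQR S hS) hL hU h.1 h.2)

theorem IsDyadicBox.isRDPOf {R : Set (Grid 2 n)} (hR : IsDyadicBox R)
    {Q : Finset (Set (Grid 2 n))} (hQ : ∀ S ∈ Q, IsDyadicBox S)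
    (hdisj : (Q : Set (Set (Grid 2 n))).PairwiseDisjoint id) (hcover : ⋃ S ∈ Q, S = R) :
    IsRDPOf R Q := by
  induction R using WellFoundedLT.induction generalizing Q with
  | _ R ih =>
  have hQR : ∀ S ∈ Q, S ⊆ R := fun S hS => hcover ▸ Finset.subset_set_biUnion_of_mem (f := id) hS
  by_cases hRQ : R ∈ Q
  · rw [Finset.eq_singleton_iff_unique_mem.2 ⟨hRQ, fun S hS => by_contra fun hSR =>
      Set.not_disjoint_of_subset (hQ S hS).nonempty (hQR S hS) (hdisj hS hRQ hSR)⟩]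
    exact .refl R
  have hQne : Q.Nonempty := by
    obtain ⟨x, hx⟩ := hR.nonempty
    obtain ⟨S, hS, -⟩ := Set.mem_iUnion₂.1 (hcover.symm ▸ hx)
    exact ⟨S, hS⟩
  obtain ⟨R₁, R₂, hsp, h₁, h₂, hQ₁₂⟩ := hR.exists_isDyadicSplit hQ hQR hdisj hRQ hQne
  have hQ_eq : Q = Q.filter (· ⊆ R₁) ∪ Q.filter (· ⊆ R₂) := by
    ext S
    simp only [Finset.mem_union, Finset.mem_filter, ← and_or_left]
    exact ⟨fun h => ⟨h, hQ₁₂ S h⟩, fun h => h.1⟩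
  have hcover' : ⋃ S ∈ Q, S = R₁ ∪ R₂ := hcover.trans hsp.union_eq.symm
  have hQ' (T : Set (Grid 2 n)) : ∀ S ∈ Q.filter (· ⊆ T), IsDyadicBox S :=
    fun S hS => hQ S (Finset.mem_filter.1 hS).1
  have hdisj' (T : Set (Grid 2 n)) :
      ((Q.filter (· ⊆ T) : Finset _) : Set (Set (Grid 2 n))).PairwiseDisjoint id :=
    hdisj.subset (Finset.coe_subset.2 (Finset.filter_subset _ _))
  rw [hQ_eq]
  exact .split hsp
    (ih R₁ hsp.ssubset_left h₁ (hQ' R₁) (hdisj' R₁)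
      (Finset.biUnion_filter_subset_eq hcover' hsp.disjoint hQ₁₂))
    (ih R₂ hsp.ssubset_right h₂ (hQ' R₂) (hdisj' R₂)
      (Finset.biUnion_filter_subset_eq (hcover'.trans (Set.union_comm _ _)) hsp.disjoint.symm
        fun S hS => (hQ₁₂ S hS).symm))

theorem exists_dyadicInterval_prod_iff {R : Set (Grid 2 n)} :
    (∃ I₀ I₁ : Set (Fin n), IsDyadicInterval n I₀ ∧ IsDyadicInterval n I₁ ∧
      R = {x : Grid 2 n | x 0 ∈ I₀ ∧ x 1 ∈ I₁}) ↔ IsDyadicBox R := by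
  constructor
  · rintro ⟨I₀, I₁, h₀, h₁, rfl⟩
    refine ⟨![I₀, I₁], fun i => by fin_cases i <;> assumption, ?_⟩
    ext x
    simp [Fin.forall_fin_two]
  · rintro ⟨I, hI, rfl⟩
    exact ⟨I 0, I 1, hI 0, hI 1, by ext x; simp [Fin.forall_fin_two]⟩

end Planar

theorem statement10_general (k : ℕ) (n : ℕ) (hn : n = 2 ^ k)
    (P : Finset (Set (Grid 2 n))) (hP : IsPartition P) :
    IsRDPPartition 2 n P ↔
      ∀ R ∈ P, ∃ I₀ I₁ : Set (Fin n),
        IsDyadicInterval n I₀ ∧ IsDyadicInterval n I₁ ∧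
        R = {x : Grid 2 n | x 0 ∈ I₀ ∧ x 1 ∈ I₁} := by
  simp only [exists_dyadicInterval_prod_iff]
  have huniv : IsDyadicBox (Set.univ : Set (Grid 2 n)) := isDyadicBox_univ hn
  refine ⟨fun h => h.isDyadicBox huniv, fun h => ?_⟩
  have hP' := IsRDPPartition.triv.erase_union (Finset.mem_singleton_self _)
    (huniv.isRDPOf h hP.2.1 hP.2.2)
  rwa [Finset.erase_singleton, Finset.empty_union] at hP'

/-- A rectangular partition of the planar lattice, `n = 2^k`, is a
recursive dyadic partition iff each of its rectangles is a product of two dyadic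
intervals. Lemma 8.2 of the paper. -/
theorem statement10 (k : ℕ) (hk : 1 ≤ k) (n : ℕ) (hn : n = 2 ^ k)
    (P : Finset (Set (Grid 2 n))) (hP : IsPartition P) :
    IsRDPPartition 2 n P ↔
      ∀ R ∈ P, ∃ I₀ I₁ : Set (Fin n),
        IsDyadicInterval n I₀ ∧ IsDyadicInterval n I₁ ∧
        R = {x : Grid 2 n | x 0 ∈ I₀ ∧ x 1 ∈ I₁} :=
  statement10_general k n hn P hP
end

section
/- Let d > 1 and let θ be a real array indexed by ∏_{i=1}^d {1,...,n_i}, with average θ̄ = (Σ_j θ[j]) / ∏_{i=1}^d n_i over all indices j. Then Σ_j |θ[j] − θ̄|^{d/(d−1)} ≤ (1 + max_{i,j ∈ [d]} n_i/n_j)^{d/(d−1)} · TV(θ)^{d/(d−1)}, and as a consequence Σ_j |θ[j] − θ̄|² ≤ (1 + max_{i,j ∈ [d]} n_i/n_j)² · TV(θ)². -/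
open MeasureTheory ProbabilityTheory BigOperators

attribute [local instance] Classical.propDecidable

/-- Total variation on a general (possibly non-square) grid `∏ i, {1,…,m i}`:
the sum of `|θ u - θ v|` over all edges of the lattice graph. -/
def TVg {d : ℕ} (m : Fin d → ℕ) (θ : (∀ i, Fin (m i)) → ℝ) : ℝ :=
  ∑ x : ∀ i, Fin (m i), ∑ i : Fin d,
    if h : (x i : ℕ) + 1 < m i then
      |θ (Function.update x i ⟨(x i : ℕ) + 1, h⟩) - θ x| else 0

/-! The proof follows the Gagliardo–Nirenberg–Sobolev argument. Write `θ̄` for the mean and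
`c = minᵢ nᵢ`. Moving along the line through `x` in direction `i` shows that `|θ x - θ̄|` is at most
the sum over that line of `F y = |θ y - θ̄| / c + Σⱼ |∂ⱼ θ y|`; the grid-lines (Loomis–Whitney)
inequality turns these `d` line bounds into `Σ |θ - θ̄| ^ (d/(d-1)) ≤ (Σ F) ^ (d/(d-1))`. Joining
any two points by a path that changes one coordinate at a time gives the `L¹` Poincaré inequality
`Σ |θ - θ̄| ≤ Σᵢ nᵢ TVᵢ(θ)`, hence `Σ F ≤ (1 + maxᵢⱼ nᵢ/nⱼ) TV(θ)`. The `ℓ²` bound follows because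
`d/(d-1) ≤ 2` and `ℓᵖ` norms decrease in `p`. -/

open Function Finset

namespace GridTV

section ProductGrid

variable {ι : Type*} [Fintype ι] [DecidableEq ι] {A : ι → Type*} [∀ i, Fintype (A i)]

theorem sum_sum_update {M : Type*} [AddCommMonoid M] (g : (∀ i, A i) → M) (i : ι) :
    ∑ x, ∑ t, g (update x i t) = Fintype.card (A i) • ∑ x, g x := by
  have hinv : Involutive fun p : (∀ j, A j) × A i => (update p.1 i p.2, p.1 i) := by
    intro p; simp
  calc ∑ x, ∑ t, g (update x i t) = ∑ p : (∀ j, A j) × A i, g (update p.1 i p.2) :=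
        (Fintype.sum_prod_type' _).symm
    _ = ∑ p : (∀ j, A j) × A i, g p.1 := Fintype.sum_equiv hinv.toPerm _ _ fun _ => rfl
    _ = Fintype.card (A i) • ∑ x, g x := by simp [Fintype.sum_prod_type, smul_sum]

theorem sum_sum_ite {M : Type*} [AddCommMonoid M] (g : (∀ i, A i) → M) (P : ι → Prop)
    [DecidablePred P] :
    ∑ x : ∀ i, A i, ∑ y : ∀ i, A i, g (fun j => if P j then y j else x j)
      = Fintype.card (∀ i, A i) • ∑ x, g x := by
  have hinv : Involutive fun p : (∀ j, A j) × (∀ j, A j) =>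
      ((fun j => if P j then p.2 j else p.1 j : ∀ j, A j),
        (fun j => if P j then p.1 j else p.2 j : ∀ j, A j)) := by
    intro p
    refine Prod.ext ?_ ?_ <;> funext j <;> by_cases h : P j <;> simp [h]
  calc ∑ x : ∀ i, A i, ∑ y : ∀ i, A i, g (fun j => if P j then y j else x j)
      = ∑ p : (∀ j, A j) × (∀ j, A j), g (fun j => if P j then p.2 j else p.1 j) :=
        (Fintype.sum_prod_type' _).symm
    _ = ∑ p : (∀ j, A j) × (∀ j, A j), g p.1 := Fintype.sum_equiv hinv.toPerm _ _ fun _ => rfl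
    _ = Fintype.card (∀ i, A i) • ∑ x, g x := by simp [Fintype.sum_prod_type, smul_sum]

theorem sum_prod_sum_update_rpow_le {p : ℝ} (hp : (Fintype.card ι : ℝ).HolderConjugate p)
    {F : (∀ i, A i) → ℝ} (hF : 0 ≤ F) :
    ∑ x, ∏ i, (∑ t, F (update x i t)) ^ (1 / (Fintype.card ι - 1 : ℝ)) ≤ (∑ x, F x) ^ p := by
  let _ : ∀ i, MeasurableSpace (A i) := fun _ => ⊤
  have hpi : ∀ g : (∀ i, A i) → ENNReal,
      ∫⁻ x, g x ∂(Measure.pi fun i => Measure.count) = ∑ x, g x := by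
    intro g
    have hx : ∀ x : ∀ i, A i, Measure.pi (fun i => Measure.count) {x} = 1 := by
      intro x
      rw [← Set.univ_pi_singleton, Measure.pi_pi]
      simp
    simp [lintegral_fintype, hx]
  have key := lintegral_prod_lintegral_pow_le (fun i => (Measure.count : Measure (A i))) hp
    (f := fun x => ENNReal.ofReal (F x)) (measurable_of_countable _)
  simp only [hpi, lintegral_count, tsum_fintype] at key
  have hr : 0 ≤ 1 / (Fintype.card ι - 1 : ℝ) := one_div_nonneg.2 (by linarith [hp.lt])
  have hline : ∀ x i, 0 ≤ ∑ t, F (update x i t) := fun x i => sum_nonneg fun t _ => hF _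
  have hL : ∑ x, ∏ i, (∑ t, ENNReal.ofReal (F (update x i t))) ^ (1 / (Fintype.card ι - 1 : ℝ))
      = ENNReal.ofReal (∑ x, ∏ i, (∑ t, F (update x i t)) ^ (1 / (Fintype.card ι - 1 : ℝ))) := by
    rw [ENNReal.ofReal_sum_of_nonneg fun x _ =>
      prod_nonneg fun i _ => Real.rpow_nonneg (hline x i) _]
    refine sum_congr rfl fun x _ => ?_
    rw [ENNReal.ofReal_prod_of_nonneg fun i _ => Real.rpow_nonneg (hline x i) _]
    refine prod_congr rfl fun i _ => ?_
    rw [← ENNReal.ofReal_rpow_of_nonneg (hline x i) hr,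
      ENNReal.ofReal_sum_of_nonneg fun t _ => hF _]
  rw [hL, ← ENNReal.ofReal_sum_of_nonneg fun x _ => hF x,
    ENNReal.ofReal_rpow_of_nonneg (sum_nonneg fun x _ => hF x) hp.symm.pos.le] at key
  exact (ENNReal.ofReal_le_ofReal_iff (Real.rpow_nonneg (sum_nonneg fun x _ => hF x) p)).1 key

theorem sum_rpow_le_of_le_sum_update (hι : 1 < Fintype.card ι) {g F : (∀ i, A i) → ℝ}
    (hg : 0 ≤ g) (hF : 0 ≤ F) (h : ∀ i x, g x ≤ ∑ t, F (update x i t)) :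
    ∑ x, g x ^ ((Fintype.card ι : ℝ) / (Fintype.card ι - 1))
      ≤ (∑ x, F x) ^ ((Fintype.card ι : ℝ) / (Fintype.card ι - 1)) := by
  set n : ℝ := (Fintype.card ι : ℝ) with hn_def
  have hn : 1 < n := by rw [hn_def]; exact_mod_cast hι
  refine (sum_le_sum fun x _ => ?_).trans
    (sum_prod_sum_update_rpow_le ((Real.holderConjugate_iff_eq_conjExponent hn).2 rfl) hF)
  calc g x ^ (n / (n - 1)) = ∏ _i : ι, g x ^ (1 / (n - 1)) := by
        rw [prod_const, card_univ, ← Real.rpow_natCast, ← Real.rpow_mul (hg x), ← hn_def]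
        field_simp
    _ ≤ ∏ i, (∑ t, F (update x i t)) ^ (1 / (n - 1)) :=
        prod_le_prod (fun i _ => Real.rpow_nonneg (hg x) _) fun i _ =>
          Real.rpow_le_rpow (hg x) (h i x) (one_div_nonneg.2 (by linarith))

end ProductGrid

theorem sum_rpow_le_rpow_sum {κ : Type*} [Fintype κ] {b : κ → ℝ} (hb : 0 ≤ b) {q : ℝ}
    (hq : 1 ≤ q) : ∑ k, b k ^ q ≤ (∑ k, b k) ^ q := by
  set S := ∑ k, b k
  have hS : 0 ≤ S := sum_nonneg fun k _ => hb k
  have hsplit : ∀ {c : ℝ}, 0 ≤ c → c ^ q = c * c ^ (q - 1) := fun hc => by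
    rw [← Real.rpow_one_add' hc (by linarith), add_sub_cancel]
  calc ∑ k, b k ^ q = ∑ k, b k * b k ^ (q - 1) := sum_congr rfl fun k _ => hsplit (hb k)
    _ ≤ ∑ k, b k * S ^ (q - 1) := sum_le_sum fun k _ => mul_le_mul_of_nonneg_left
        (Real.rpow_le_rpow (hb k) (single_le_sum (fun j _ => hb j) (mem_univ k)) (by linarith))
        (hb k)
    _ = S ^ q := by rw [← sum_mul, ← hsplit hS]

theorem sum_rpow_le_of_sum_rpow_le {κ : Type*} [Fintype κ] {u : κ → ℝ} (hu : 0 ≤ u) {K p q : ℝ}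
    (hK : 0 ≤ K) (hp : 0 < p) (hpq : p ≤ q) (h : ∑ k, u k ^ p ≤ K ^ p) :
    ∑ k, u k ^ q ≤ K ^ q := by
  have hqp : 1 ≤ q / p := (one_le_div hp).2 hpq
  have hpow : ∀ {c : ℝ}, 0 ≤ c → (c ^ p) ^ (q / p) = c ^ q := fun hc => by
    rw [← Real.rpow_mul hc, mul_div_cancel₀ _ hp.ne']
  calc ∑ k, u k ^ q = ∑ k, (u k ^ p) ^ (q / p) := sum_congr rfl fun k _ => (hpow (hu k)).symm
    _ ≤ (∑ k, u k ^ p) ^ (q / p) :=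
        sum_rpow_le_rpow_sum (fun k => Real.rpow_nonneg (hu k) p) hqp
    _ ≤ (K ^ p) ^ (q / p) :=
        Real.rpow_le_rpow (sum_nonneg fun k _ => Real.rpow_nonneg (hu k) p) h (by linarith)
    _ = K ^ q := hpow hK

theorem le_ciSup_ciSup {α ι κ : Type*} [ConditionallyCompleteLattice α] [Finite ι] [Finite κ]
    (f : ι → κ → α) (i : ι) (j : κ) : f i j ≤ ⨆ i, ⨆ j, f i j :=
  (le_ciSup (Finite.bddAbove_range (f i)) j).trans
    (le_ciSup (Finite.bddAbove_range fun i => ⨆ j, f i j) i)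

theorem abs_sub_le_sum_abs_succ_sub {n : ℕ} (f : Fin n → ℝ) (a b : Fin n) :
    |f b - f a| ≤ ∑ t : Fin n, if h : (t : ℕ) + 1 < n then |f ⟨t + 1, h⟩ - f t| else 0 := by
  wlog hab : a ≤ b generalizing a b
  · rw [abs_sub_comm]
    exact this b a (le_of_not_ge hab)
  let g : ℕ → ℝ := fun s => if h : s < n then f ⟨s, h⟩ else 0
  let e : ℕ → ℝ := fun s => if s + 1 < n then |g (s + 1) - g s| else 0
  have he : ∀ s, 0 ≤ e s := fun s => by unfold e; split <;> positivity
  calc |f b - f a| = dist (g a) (g b) := by simp [g, Real.dist_eq, abs_sub_comm]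
    _ ≤ ∑ s ∈ Ico (a : ℕ) b, dist (g s) (g (s + 1)) := dist_le_Ico_sum_dist g hab
    _ = ∑ s ∈ Ico (a : ℕ) b, e s := sum_congr rfl fun s hs => by
        have : s + 1 < n := by have := b.isLt; simp only [mem_Ico] at hs; omega
        simp [e, this, Real.dist_eq, abs_sub_comm]
    _ ≤ ∑ s ∈ range n, e s := sum_le_sum_of_subset_of_nonneg
        (fun s hs => by have := b.isLt; simp only [mem_Ico, mem_range] at hs ⊢; omega)
        fun s _ _ => he s
    _ = _ := by
        rw [← Fin.sum_univ_eq_sum_range]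
        refine sum_congr rfl fun t _ => ?_
        by_cases h : (t : ℕ) + 1 < n <;> simp [e, g, h, t.isLt]

section Lattice

variable {d : ℕ} {m : Fin d → ℕ}

def edgeVar (θ : (∀ i, Fin (m i)) → ℝ) (i : Fin d) (x : ∀ i, Fin (m i)) : ℝ :=
  if h : (x i : ℕ) + 1 < m i then |θ (update x i ⟨x i + 1, h⟩) - θ x| else 0

def lineTV (θ : (∀ i, Fin (m i)) → ℝ) (i : Fin d) (x : ∀ i, Fin (m i)) : ℝ :=
  ∑ t, edgeVar θ i (update x i t)

variable (θ : (∀ i, Fin (m i)) → ℝ)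

theorem edgeVar_nonneg (i : Fin d) (x : ∀ i, Fin (m i)) : 0 ≤ edgeVar θ i x := by
  unfold edgeVar; split <;> positivity

theorem TVg_eq_sum_sum_edgeVar : TVg m θ = ∑ i, ∑ x, edgeVar θ i x := sum_comm

theorem TVg_nonneg : 0 ≤ TVg m θ := by
  rw [TVg_eq_sum_sum_edgeVar]
  exact sum_nonneg fun i _ => sum_nonneg fun x _ => edgeVar_nonneg θ i x

theorem sum_lineTV (i : Fin d) : ∑ x, lineTV θ i x = m i * ∑ x, edgeVar θ i x := by
  simp only [lineTV, sum_sum_update, Fintype.card_fin, nsmul_eq_mul]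

theorem abs_sub_le_lineTV (i : Fin d) (x : ∀ i, Fin (m i)) (a b : Fin (m i)) :
    |θ (update x i b) - θ (update x i a)| ≤ lineTV θ i x := by
  refine (abs_sub_le_sum_abs_succ_sub (fun s => θ (update x i s)) a b).trans_eq ?_
  simp [lineTV, edgeVar]

theorem abs_sub_le_sum_lineTV (x y : ∀ i, Fin (m i)) :
    |θ x - θ y| ≤ ∑ i : Fin d, lineTV θ i (fun j => if j < i then y j else x j) := by
  let w : ℕ → ∀ j, Fin (m j) := fun k j => if (j : ℕ) < k then y j else x j
  have hstep : ∀ i : Fin d, |θ (w i) - θ (w (i + 1))|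
      ≤ lineTV θ i (fun j => if j < i then y j else x j) := by
    intro i
    have hw : w i = fun j => if j < i then y j else x j := by
      funext j; simp only [w, Fin.lt_def]
    have h0 : update (w i) i (x i) = w i := by simp [w]
    have h1 : update (w i) i (y i) = w (i + 1) := by
      funext j
      rcases eq_or_ne j i with rfl | hj
      · simp [w]
      · have : (j : ℕ) ≠ i := Fin.val_ne_of_ne hj
        simp only [w, update_of_ne hj]
        split_ifs <;> first | rfl | omega
    have := abs_sub_le_lineTV θ i (w i) (x i) (y i)
    rwa [h0, h1, abs_sub_comm, hw] at this
  calc |θ x - θ y| = |∑ k ∈ range d, (θ (w k) - θ (w (k + 1)))| := by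
        have hx : w 0 = x := by funext j; simp [w]
        have hy : w d = y := by funext j; simp [w]
        rw [sum_range_sub', hx, hy]
    _ ≤ ∑ k ∈ range d, |θ (w k) - θ (w (k + 1))| := abs_sum_le_sum_abs _ _
    _ = ∑ i : Fin d, |θ (w i) - θ (w (i + 1))| :=
        (Fin.sum_univ_eq_sum_range (fun k => |θ (w k) - θ (w (k + 1))|) d).symm
    _ ≤ _ := sum_le_sum fun i _ => hstep i

theorem sum_abs_sub_mean_le [Nonempty (∀ i, Fin (m i))] :
    ∑ x, |θ x - (∑ y, θ y) / ∏ i, (m i : ℝ)| ≤ ∑ i, (m i : ℝ) * ∑ x, edgeVar θ i x := by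
  set N : ℝ := ∏ i, (m i : ℝ)
  have hN : N = Fintype.card (∀ i, Fin (m i)) := by simp [N, Fintype.card_pi]
  have hN0 : 0 < N := by rw [hN]; exact_mod_cast Fintype.card_pos
  have hmean : ∀ x, N * |θ x - (∑ y, θ y) / N| ≤ ∑ y, |θ x - θ y| := fun x => by
    have hx : θ x - (∑ y, θ y) / N = (∑ y, (θ x - θ y)) / N := by
      rw [sum_sub_distrib, sum_const, card_univ, nsmul_eq_mul, ← hN]
      field_simp
    rw [hx, abs_div, abs_of_pos hN0, mul_div_cancel₀ _ hN0.ne']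
    exact abs_sum_le_sum_abs _ _
  refine le_of_mul_le_mul_left ?_ hN0
  calc N * ∑ x, |θ x - (∑ y, θ y) / N| ≤ ∑ x, ∑ y, |θ x - θ y| := by
        rw [mul_sum]; exact sum_le_sum fun x _ => hmean x
    _ ≤ ∑ x : ∀ i, Fin (m i), ∑ y : ∀ i, Fin (m i),
          ∑ i, lineTV θ i (fun j => if j < i then y j else x j) :=
        sum_le_sum fun x _ => sum_le_sum fun y _ => abs_sub_le_sum_lineTV θ x y
    _ = ∑ i, ∑ x : ∀ i, Fin (m i), ∑ y : ∀ i, Fin (m i),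
          lineTV θ i (fun j => if j < i then y j else x j) := by
        simp only [sum_comm (γ := Fin d)]
    _ = N * ∑ i, (m i : ℝ) * ∑ x, edgeVar θ i x := by
        simp only [sum_sum_ite, sum_lineTV, nsmul_eq_mul, ← hN, mul_sum]

noncomputable def majorant (a c : ℝ) (y : ∀ i, Fin (m i)) : ℝ :=
  c⁻¹ * |θ y - a| + ∑ j, edgeVar θ j y

theorem majorant_nonneg (a : ℝ) {c : ℝ} (hc : 0 ≤ c) : 0 ≤ majorant θ a c := fun y =>
  add_nonneg (mul_nonneg (inv_nonneg.2 hc) (abs_nonneg _))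
    (sum_nonneg fun j _ => edgeVar_nonneg θ j y)

theorem abs_sub_le_sum_majorant (a : ℝ) {c : ℝ} (hc : 0 < c) (i : Fin d) (hci : c ≤ m i)
    (x : ∀ i, Fin (m i)) : |θ x - a| ≤ ∑ t, majorant θ a c (update x i t) := by
  have hmi : (0 : ℝ) < m i := by exact_mod_cast (x i).pos
  have hline : ∀ t, |θ x - a| ≤ |θ (update x i t) - a| + lineTV θ i x := fun t => by
    have := abs_sub_le_lineTV θ i x t (x i)
    rw [update_eq_self] at this
    calc |θ x - a| = |(θ (update x i t) - a) + (θ x - θ (update x i t))| := by ring_nf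
      _ ≤ _ := (abs_add_le _ _).trans (add_le_add le_rfl this)
  have havg : |θ x - a| ≤ (m i : ℝ)⁻¹ * ∑ t, |θ (update x i t) - a| + lineTV θ i x := by
    have := sum_le_sum fun t (_ : t ∈ univ) => hline t
    rw [sum_add_distrib, sum_const, sum_const, card_univ, Fintype.card_fin, nsmul_eq_mul,
      nsmul_eq_mul] at this
    rw [inv_mul_eq_div, div_add' _ _ _ hmi.ne', le_div_iff₀ hmi]
    linarith
  calc |θ x - a| ≤ (m i : ℝ)⁻¹ * ∑ t, |θ (update x i t) - a| + lineTV θ i x := havg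
    _ ≤ c⁻¹ * ∑ t, |θ (update x i t) - a| + ∑ t, ∑ j, edgeVar θ j (update x i t) :=
        add_le_add
          (mul_le_mul_of_nonneg_right (inv_anti₀ hc hci) (sum_nonneg fun t _ => abs_nonneg _))
          (sum_le_sum fun t _ => single_le_sum (fun j _ => edgeVar_nonneg θ j _) (mem_univ i))
    _ = ∑ t, majorant θ a c (update x i t) := by
        simp only [majorant, sum_add_distrib, mul_sum]

theorem sum_majorant_le [Nonempty (∀ i, Fin (m i))] {c R : ℝ} (hc : 0 < c)
    (hR : ∀ i, (m i : ℝ) / c ≤ R) :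
    ∑ y, majorant θ ((∑ y, θ y) / ∏ i, (m i : ℝ)) c y ≤ (1 + R) * TVg m θ := by
  have hpoincare : c⁻¹ * ∑ x, |θ x - (∑ y, θ y) / ∏ i, (m i : ℝ)| ≤ R * TVg m θ :=
    calc c⁻¹ * ∑ x, |θ x - (∑ y, θ y) / ∏ i, (m i : ℝ)|
        ≤ c⁻¹ * ∑ i, (m i : ℝ) * ∑ x, edgeVar θ i x :=
          mul_le_mul_of_nonneg_left (sum_abs_sub_mean_le θ) (inv_nonneg.2 hc.le)
      _ = ∑ i, (m i : ℝ) / c * ∑ x, edgeVar θ i x := by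
          rw [mul_sum]; exact sum_congr rfl fun i _ => by ring
      _ ≤ ∑ i, R * ∑ x, edgeVar θ i x := sum_le_sum fun i _ =>
          mul_le_mul_of_nonneg_right (hR i) (sum_nonneg fun x _ => edgeVar_nonneg θ i x)
      _ = R * TVg m θ := by rw [TVg_eq_sum_sum_edgeVar, mul_sum]
  simp only [majorant, sum_add_distrib, ← mul_sum]
  rw [sum_comm, ← TVg_eq_sum_sum_edgeVar]
  linarith

theorem sum_abs_sub_mean_rpow_le (hd : 1 < d) [Nonempty (∀ i, Fin (m i))] {R : ℝ}
    (hR : ∀ i j, (m i : ℝ) / m j ≤ R) :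
    ∑ x, |θ x - (∑ y, θ y) / ∏ i, (m i : ℝ)| ^ ((d : ℝ) / (d - 1))
      ≤ ((1 + R) * TVg m θ) ^ ((d : ℝ) / (d - 1)) := by
  have hd' : (1 : ℝ) < d := by exact_mod_cast hd
  set a := (∑ y, θ y) / ∏ i, (m i : ℝ)
  have : Nonempty (Fin d) := ⟨⟨0, by omega⟩⟩
  obtain ⟨i₀, hi₀⟩ := Finite.exists_min m
  have hc : (0 : ℝ) < m i₀ := by exact_mod_cast (Classical.arbitrary (∀ i, Fin (m i)) i₀).pos
  have key := sum_rpow_le_of_le_sum_update (by simpa using hd) (fun x => abs_nonneg (θ x - a))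
    (majorant_nonneg θ a hc.le)
    fun i x => abs_sub_le_sum_majorant θ a hc i (by exact_mod_cast hi₀ i) x
  rw [Fintype.card_fin] at key
  exact key.trans <| Real.rpow_le_rpow (sum_nonneg fun y _ => majorant_nonneg θ a hc.le y)
    (sum_majorant_le θ hc fun i => hR i i₀) (div_pos (by linarith) (by linarith)).le

end Lattice

end GridTV

open GridTV in
theorem statement14_general (d : ℕ) (hd : 1 < d) (m : Fin d → ℕ)
    (θ : (∀ i, Fin (m i)) → ℝ) :
    (∑ x : ∀ i, Fin (m i),
        |θ x - (∑ y : ∀ i, Fin (m i), θ y) / ∏ i, (m i : ℝ)| ^ ((d : ℝ) / ((d : ℝ) - 1))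
      ≤ (1 + ⨆ i : Fin d, ⨆ j : Fin d, (m i : ℝ) / (m j : ℝ)) ^ ((d : ℝ) / ((d : ℝ) - 1))
          * TVg m θ ^ ((d : ℝ) / ((d : ℝ) - 1))) ∧
    (∑ x : ∀ i, Fin (m i),
        |θ x - (∑ y : ∀ i, Fin (m i), θ y) / ∏ i, (m i : ℝ)| ^ 2
      ≤ (1 + ⨆ i : Fin d, ⨆ j : Fin d, (m i : ℝ) / (m j : ℝ)) ^ 2
          * TVg m θ ^ 2) := by
  have hd' : (1 : ℝ) < d := by exact_mod_cast hd
  have hp : 0 < (d : ℝ) / ((d : ℝ) - 1) := div_pos (by linarith) (by linarith)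
  have hp2 : (d : ℝ) / ((d : ℝ) - 1) ≤ 2 := by
    rw [div_le_iff₀ (by linarith)]
    linarith [(show (2 : ℝ) ≤ d by exact_mod_cast hd)]
  rcases isEmpty_or_nonempty (∀ i, Fin (m i)) with hgrid | hgrid
  · simp [TVg, Real.zero_rpow hp.ne']
  set R := ⨆ i : Fin d, ⨆ j : Fin d, (m i : ℝ) / (m j : ℝ)
  have hR : ∀ i j, (m i : ℝ) / m j ≤ R := le_ciSup_ciSup _
  obtain ⟨i₀⟩ : Nonempty (Fin d) := ⟨⟨0, by omega⟩⟩
  have hR1 : 0 ≤ 1 + R := by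
    linarith [(div_nonneg (Nat.cast_nonneg' (m i₀)) (Nat.cast_nonneg' (m i₀))).trans (hR i₀ i₀)]
  have hK : 0 ≤ (1 + R) * TVg m θ := mul_nonneg hR1 (TVg_nonneg θ)
  have hLp := sum_abs_sub_mean_rpow_le θ hd hR
  refine ⟨by rwa [Real.mul_rpow hR1 (TVg_nonneg θ)] at hLp, ?_⟩
  simpa only [Real.rpow_two, mul_pow] using
    sum_rpow_le_of_sum_rpow_le (fun x => abs_nonneg _) hK hp hp2 hLp

/-- Discrete Gagliardo–Nirenberg–Sobolev inequality,
Proposition 9.5 of the paper. -/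
theorem statement14 (d : ℕ) (hd : 1 < d) (m : Fin d → ℕ) (hm : ∀ i, 1 ≤ m i)
    (θ : (∀ i, Fin (m i)) → ℝ) :
    (∑ x : ∀ i, Fin (m i),
        |θ x - (∑ y : ∀ i, Fin (m i), θ y) / ∏ i, (m i : ℝ)| ^ ((d : ℝ) / ((d : ℝ) - 1))
      ≤ (1 + ⨆ i : Fin d, ⨆ j : Fin d, (m i : ℝ) / (m j : ℝ)) ^ ((d : ℝ) / ((d : ℝ) - 1))
          * TVg m θ ^ ((d : ℝ) / ((d : ℝ) - 1))) ∧
    (∑ x : ∀ i, Fin (m i),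
        |θ x - (∑ y : ∀ i, Fin (m i), θ y) / ∏ i, (m i : ℝ)| ^ 2
      ≤ (1 + ⨆ i : Fin d, ⨆ j : Fin d, (m i : ℝ) / (m j : ℝ)) ^ 2
          * TVg m θ ^ 2) :=
  statement14_general d hd m θ
end

section
/- Fix a positive integer r. There exists a constant C_r depending only on r such that for every θ ∈ ℝ^n there exists a vector θ' ∈ ℝ^n that is a polynomial vector of degree r−1 (i.e. θ'_i = f(i/n) for all i, for some real polynomial f of degree at most r−1) satisfying max_{1 ≤ i ≤ n} |θ_i − θ'_i| ≤ C_r·n^{r−1}·‖D^(r)(θ)‖_1 = C_r·V^(r)(θ). -/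
/-!
Take for `f` Newton's forward-difference interpolant of `θ` at the first `r` nodes, rescaled by
`x ↦ n x - 1` so that node `i` sits at `(i + 1) / n`. The error `e = θ - f` has
`Δ^k e(0) = 0` for `k < r` and `Δ^r e = Δ^r θ`. Telescoping `e(m) = ∑_{j<m} Δe(j)` and applying
induction on `r` to `Δe` on one point fewer gives `|e(m)| ≤ n^(r-1) ∑_j |Δ^r θ_j|`, so `C_r = 1`.
-/

open MeasureTheory ProbabilityTheory BigOperators

attribute [local instance] Classical.propDecidable

open Finset Polynomial
open scoped fwdDiff Nat

section

variable {G : Type*} [AddCommGroup G]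

def newtonInterp (g : ℕ → G) (r m : ℕ) : G :=
  ∑ j ∈ range (r + 1), m.choose j • Δ_[1] ^[j] g 0

theorem fwdDiff_iter_newtonInterp_zero (g : ℕ → G) {r k : ℕ} (hk : k ≤ r) :
    Δ_[1] ^[k] (newtonInterp g r) 0 = Δ_[1] ^[k] g 0 := by
  calc Δ_[1] ^[k] (newtonInterp g r) 0
      = ∑ j ∈ range (r + 1), Δ_[1] ^[k] (fun m ↦ m.choose j • Δ_[1] ^[j] g 0) 0 := by
        simp only [newtonInterp, fwdDiff_iter_eq_sum_shift, smul_sum]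
        rw [sum_comm]
    _ = ∑ j ∈ range (r + 1), (Δ_[1] ^[k] (fun m ↦ m.choose j : ℕ → ℤ) 0) • Δ_[1] ^[j] g 0 := by
        simp only [fwdDiff_iter_eq_sum_shift, zero_add, sum_smul, smul_assoc, natCast_zsmul]
    _ = Δ_[1] ^[k] g 0 := by
        simp [fwdDiff_iter_choose_zero, Nat.lt_succ_iff.mpr hk]

theorem fwdDiff_iter_sub {M : Type*} [AddCommMonoid M] (h : M) (f f' : M → G) (k : ℕ) :
    Δ_[h] ^[k] (f - f') = Δ_[h] ^[k] f - Δ_[h] ^[k] f' := by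
  simpa only [fwdDiff_aux.coe_fwdDiffₗ_pow] using map_sub (fwdDiff_aux.fwdDiffₗ M G h ^ k) f f'

theorem fwdDiff_iter_comp_natCast {R : Type*} [AddCommMonoidWithOne R] (f : R → G) (k j : ℕ) :
    Δ_[1] ^[k] (fun m : ℕ ↦ f m) j = Δ_[1] ^[k] f j := by
  simp [fwdDiff_iter_eq_sum_shift]

end

section

variable {K : Type*} [Field K]

noncomputable def newtonPoly (g : ℕ → K) (r : ℕ) : K[X] :=
  ∑ j ∈ range (r + 1), C (Δ_[1] ^[j] g 0 / j !) * descPochhammer K j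

theorem natDegree_newtonPoly_le (g : ℕ → K) (r : ℕ) : (newtonPoly g r).natDegree ≤ r := by
  refine natDegree_sum_le_of_forall_le _ _ fun j hj ↦ ?_
  refine (natDegree_C_mul_le _ _).trans ?_
  rw [descPochhammer_natDegree]
  exact Nat.lt_succ_iff.mp (mem_range.mp hj)

theorem eval_newtonPoly_natCast [CharZero K] (g : ℕ → K) (r m : ℕ) :
    (newtonPoly g r).eval (m : K) = newtonInterp g r m := by
  simp only [newtonPoly, newtonInterp, eval_finsetSum, eval_mul, eval_C, nsmul_eq_mul,
    Nat.cast_choose_eq_descPochhammer_div]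
  exact sum_congr rfl fun j _ ↦ by ring

theorem fwdDiff_iter_newtonInterp_eq_zero [CharZero K] (g : ℕ → K) (r : ℕ) :
    Δ_[1] ^[r + 1] (newtonInterp g r) = 0 := by
  ext j
  have hp : newtonInterp g r = fun m : ℕ ↦ (newtonPoly g r).eval (m : K) :=
    funext fun m ↦ (eval_newtonPoly_natCast g r m).symm
  rw [hp, fwdDiff_iter_comp_natCast (newtonPoly g r).eval,
    fwdDiff_iter_eq_zero_of_degree_lt (Nat.lt_succ_of_le (natDegree_newtonPoly_le g r))]
  rfl

end

theorem norm_le_sum_norm_fwdDiff {E : Type*} [SeminormedAddCommGroup E] {u : ℕ → E}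
    (hu : u 0 = 0) (m : ℕ) : ‖u m‖ ≤ ∑ j ∈ range m, ‖Δ_[1] u j‖ :=
  calc ‖u m‖ = ‖∑ j ∈ range m, Δ_[1] u j‖ := by rw [← sub_zero (u m), ← hu, ← sum_range_sub]; rfl
    _ ≤ ∑ j ∈ range m, ‖Δ_[1] u j‖ := norm_sum_le _ _

theorem norm_le_of_fwdDiff_iter_apply_zero_eq_zero {E : Type*} [SeminormedAddCommGroup E]
    (r : ℕ) {u : ℕ → E} (hu : ∀ k ≤ r, Δ_[1] ^[k] u 0 = 0) {m n : ℕ} (hmn : m < n) :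
    ‖u m‖ ≤ n ^ r * ∑ j ∈ range (n - (r + 1)), ‖Δ_[1] ^[r + 1] u j‖ := by
  induction r generalizing u m n with
  | zero =>
    have hm : range m ⊆ range (n - 1) := range_subset_range.mpr (by omega)
    simpa using (norm_le_sum_norm_fwdDiff (hu 0 le_rfl) m).trans
      (sum_le_sum_of_subset_of_nonneg hm fun _ _ _ ↦ norm_nonneg _)
  | succ r ih =>
    set S := ∑ j ∈ range (n - (r + 2)), ‖Δ_[1] ^[r + 2] u j‖
    have hΔ : ∀ j < m, ‖Δ_[1] u j‖ ≤ n ^ r * S := fun j hj ↦ by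
      have := ih (u := Δ_[1] u) (m := j) (n := n - 1)
        (fun k hk ↦ by rw [← Function.iterate_succ_apply]; exact hu _ (by omega)) (by omega)
      rw [← Function.iterate_succ_apply, show n - 1 - (r + 1) = n - (r + 2) by omega] at this
      refine this.trans (mul_le_mul_of_nonneg_right ?_ (sum_nonneg fun _ _ ↦ norm_nonneg _))
      gcongr
      omega
    calc ‖u m‖ ≤ ∑ j ∈ range m, ‖Δ_[1] u j‖ := norm_le_sum_norm_fwdDiff (hu 0 (Nat.zero_le _)) m
      _ ≤ ∑ j ∈ range m, (n : ℝ) ^ r * S := sum_le_sum fun j hj ↦ hΔ j (mem_range.mp hj)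
      _ ≤ n ^ (r + 1) * S := by
          rw [sum_const, card_range, nsmul_eq_mul, pow_succ', mul_assoc]
          gcongr

def extendByZero {n : ℕ} (θ : Fin n → ℝ) (j : ℕ) : ℝ := if h : j < n then θ ⟨j, h⟩ else 0

theorem Vr_eq_sum_fwdDiff_iter {n : ℕ} (r : ℕ) (θ : Fin n → ℝ) :
    Vr r θ = n ^ (r - 1) * ∑ j ∈ range (n - r), |Δ_[1] ^[r] (extendByZero θ) j| := by
  unfold Vr
  congr 2 with j
  rw [fwdDiff_iter_eq_sum_shift]
  congr 2 with i
  simp [extendByZero]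

/-- Approximation of an arbitrary sequence by a single polynomial of
degree `r-1` up to `C_r · V^(r)(θ)` in sup norm, Lemma 8.7 of the paper. -/
theorem statement18 (r : ℕ) (hr : 1 ≤ r) :
    ∃ Cr : ℝ, 0 < Cr ∧ ∀ n : ℕ, 1 ≤ n → ∀ θ : Fin n → ℝ,
      ∃ f : Polynomial ℝ, f.natDegree ≤ r - 1 ∧
        ∀ i : Fin n, |θ i - Polynomial.eval ((((i : ℕ) : ℝ) + 1) / n) f| ≤ Cr * Vr r θ := by
  obtain ⟨s, rfl⟩ : ∃ s, r = s + 1 := ⟨r - 1, by omega⟩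
  refine ⟨1, one_pos, fun n hn θ ↦ ?_⟩
  set g := extendByZero θ
  refine ⟨(newtonPoly g s).comp (C (n : ℝ) * X + C (-1)), ?_, fun i ↦ ?_⟩
  · calc _ ≤ (newtonPoly g s).natDegree * (C (n : ℝ) * X + C (-1)).natDegree := natDegree_comp_le
      _ ≤ s * 1 := Nat.mul_le_mul (natDegree_newtonPoly_le g s) natDegree_linear_le
      _ = s + 1 - 1 := by simp
  have hi : eval ((((i : ℕ) : ℝ) + 1) / n) (C (n : ℝ) * X + C (-1)) = (i : ℕ) := by
    simp only [map_natCast, map_neg, map_one, eval_add, eval_mul, eval_natCast, eval_X, eval_neg,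
      eval_one]
    field_simp
    ring
  have hθ : θ i = g i := by simp [g, extendByZero]
  have hrem := norm_le_of_fwdDiff_iter_apply_zero_eq_zero s (u := g - newtonInterp g s)
    (fun k hk ↦ by rw [fwdDiff_iter_sub, Pi.sub_apply, fwdDiff_iter_newtonInterp_zero g hk, sub_self])
    i.isLt
  rw [fwdDiff_iter_sub, fwdDiff_iter_newtonInterp_eq_zero, sub_zero] at hrem
  rw [eval_comp, hi, eval_newtonPoly_natCast, Vr_eq_sum_fwdDiff_iter, one_mul, hθ]
  simpa using hrem
end
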